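/- arXiv:2309.09341 — 5 statements merged into one kernel-verified Lean document; each statement's English description precedes it below -/
import Mathlib

section
/- Let 0<q<1 be real, let h̃1,h̃2,h̃3,l̃1,l̃2,l̃3,β̃,α̃,μ0,α be real numbers and t1,t2,t3 nonzero complex numbers. Set χ = (h̃1+h̃2+h̃3−l̃1−l̃2−l̃3−β̃)/2, ν = 2μ0+α−α̃+χ, μ = μ0+χ+1, β = −β̃−χ, l_i = h̃_i+μ0 and h_i = l̃_i+μ0+χ for i=1,2,3. Let P be a function of two nonzero complex variables satisfying, for all nonzero x,s: P(x,s/q) = P(qx,s), P(x,qs) = P(x/q,s), (x−q^{μ0−1}s)P(x,s/q) = (x−q^{μ−1}s)P(x,s), and (x−q^{μ}s)P(x,qs) = (x−q^{μ0}s)P(x,s). Define Φ(x,s) = x^{−α} s^{χ+1−α̃} P(x,s). Then for all nonzero x,s with x ≠ q^{μ0−1}s and x ≠ q^{μ}s, applying A⟨3⟩(x; h1,h2,h3,l1,l2,l3,α,β) to Φ in x equals q^{ν} times applying A⟨3⟩(s; h̃1,h̃2,h̃3,l̃1,l̃2,l̃3,α̃,β̃) to Φ in s. -/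
open Filter Topology

/-- The infinite q-Pochhammer symbol `(a;q)_∞ = ∏_{j=0}^∞ (1 - q^j a)`. -/
noncomputable def qPochInf (q : ℝ) (a : ℂ) : ℂ := ∏' j : ℕ, (1 - (q : ℂ) ^ j * a)

/-- `q^r` for a real exponent `r`, using the principal branch of the complex power. -/
noncomputable def qpow (q : ℝ) (r : ℝ) : ℂ := (q : ℂ) ^ (r : ℂ)

/-- The third degenerate Ruijsenaars–van Diejen operator `A⟨3⟩` applied to `g` at `x`. -/
noncomputable def A3 (q : ℝ) (t1 t2 t3 : ℂ) (h1 h2 h3 l1 l2 l3 a b : ℝ) (g : ℂ → ℂ) (x : ℂ) : ℂ :=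
  x⁻¹ * ((x - qpow q (h1 + 1/2) * t1) * (x - qpow q (h2 + 1/2) * t2) * (x - qpow q (h3 + 1/2) * t3)) *
      g (x / (q : ℂ))
    + qpow q (2*a + 1) * x⁻¹ *
        ((x - qpow q (l1 - 1/2) * t1) * (x - qpow q (l2 - 1/2) * t2) * (x - qpow q (l3 - 1/2) * t3)) *
        g ((q : ℂ) * x)
    + qpow q (a + 1/2) *
        (-(qpow q (1/2) + qpow q (-(1/2))) * x ^ 2
          + ((qpow q h1 + qpow q l1) * t1 + (qpow q h2 + qpow q l2) * t2
              + (qpow q h3 + qpow q l3) * t3) * x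
          + qpow q ((l1 + l2 + l3 + h1 + h2 + h3) / 2) * (qpow q (b / 2) + qpow q (-(b / 2))) *
              t1 * t2 * t3 * x⁻¹) * g x


lemma qpow_add {q : ℝ} (hq : 0 < q) (r s : ℝ) : qpow q (r + s) = qpow q r * qpow q s := by
  unfold qpow; push_cast
  exact Complex.cpow_add _ _ (by exact_mod_cast hq.ne')

lemma qpow_zero (q : ℝ) : qpow q 0 = 1 := by simp [qpow]

lemma qpow_ne_zero {q : ℝ} (hq : 0 < q) (r : ℝ) : qpow q r ≠ 0 := by
  have hq' : (q : ℂ) ≠ 0 := by exact_mod_cast hq.ne'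
  unfold qpow
  rw [Complex.cpow_def_of_ne_zero hq']
  exact Complex.exp_ne_zero _

lemma qpow_neg {q : ℝ} (hq : 0 < q) (r : ℝ) : qpow q (-r) = (qpow q r)⁻¹ := by
  have h : qpow q r * qpow q (-r) = 1 := by
    rw [← qpow_add hq]
    simpa using qpow_zero q
  exact (inv_eq_of_mul_eq_one_right h).symm

lemma qpow_sub {q : ℝ} (hq : 0 < q) (r s : ℝ) : qpow q (r - s) = qpow q r / qpow q s := by
  rw [sub_eq_add_neg, qpow_add hq, qpow_neg hq, div_eq_mul_inv]

lemma qpow_nat {q : ℝ} (hq : 0 < q) (n : ℕ) (r : ℝ) : qpow q ((n : ℝ) * r) = qpow q r ^ n := by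
  induction n with
  | zero => simpa using qpow_zero q
  | succ n ih =>
    have h : ((n + 1 : ℕ) : ℝ) * r = (n : ℝ) * r + r := by push_cast; ring
    rw [h, qpow_add hq, ih, pow_succ]

lemma cpow_qmul {q : ℝ} (hq : 0 < q) {z : ℂ} (hz : z ≠ 0) (c : ℂ) :
    ((q : ℂ) * z) ^ c = (q : ℂ) ^ c * z ^ c := by
  have hq' : (q : ℂ) ≠ 0 := by exact_mod_cast hq.ne'
  rw [Complex.cpow_def_of_ne_zero (mul_ne_zero hq' hz), Complex.cpow_def_of_ne_zero hq',
    Complex.cpow_def_of_ne_zero hz, Complex.log_ofReal_mul hq hz, Complex.ofReal_log hq.le,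
    add_mul, Complex.exp_add]

lemma cpow_qdiv {q : ℝ} (hq : 0 < q) {z : ℂ} (hz : z ≠ 0) (c : ℂ) :
    (z / (q : ℂ)) ^ c = z ^ c / (q : ℂ) ^ c := by
  have h1 : z / (q : ℂ) = ((q⁻¹ : ℝ) : ℂ) * z := by
    rw [Complex.ofReal_inv]; ring
  have harg : ((q : ℂ)).arg ≠ Real.pi := by
    rw [Complex.arg_ofReal_of_nonneg hq.le]; exact Real.pi_pos.ne
  rw [h1, cpow_qmul (inv_pos.mpr hq) hz, Complex.ofReal_inv, Complex.inv_cpow _ _ harg]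
  ring

lemma qpow_mono {q : ℝ} (hq : 0 < q)
    (g1 g2 g3 g4 g5 g6 g7 g8 g9 g10 g11 : ℝ)
    (c1 c2 c3 c4 c5 c6 c7 c8 c9 c10 c11 d1 d2 d3 d4 d5 d6 d7 d8 d9 d10 d11 : ℕ)
    (E : ℝ)
    (hE : E = ((c1 : ℝ)*g1 + (c2 : ℝ)*g2 + (c3 : ℝ)*g3 + (c4 : ℝ)*g4 + (c5 : ℝ)*g5
        + (c6 : ℝ)*g6 + (c7 : ℝ)*g7 + (c8 : ℝ)*g8 + (c9 : ℝ)*g9 + (c10 : ℝ)*g10 + (c11 : ℝ)*g11)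
      - ((d1 : ℝ)*g1 + (d2 : ℝ)*g2 + (d3 : ℝ)*g3 + (d4 : ℝ)*g4 + (d5 : ℝ)*g5
        + (d6 : ℝ)*g6 + (d7 : ℝ)*g7 + (d8 : ℝ)*g8 + (d9 : ℝ)*g9 + (d10 : ℝ)*g10 + (d11 : ℝ)*g11)) :
    qpow q E = (qpow q g1 ^ c1 * qpow q g2 ^ c2 * qpow q g3 ^ c3 * qpow q g4 ^ c4
        * qpow q g5 ^ c5 * qpow q g6 ^ c6 * qpow q g7 ^ c7 * qpow q g8 ^ c8
        * qpow q g9 ^ c9 * qpow q g10 ^ c10 * qpow q g11 ^ c11)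
      / (qpow q g1 ^ d1 * qpow q g2 ^ d2 * qpow q g3 ^ d3 * qpow q g4 ^ d4
        * qpow q g5 ^ d5 * qpow q g6 ^ d6 * qpow q g7 ^ d7 * qpow q g8 ^ d8
        * qpow q g9 ^ d9 * qpow q g10 ^ d10 * qpow q g11 ^ d11) := by
  subst hE
  rw [qpow_sub hq]
  congr 1 <;> simp only [qpow_add hq, qpow_nat hq]

set_option maxHeartbeats 4000000 in
set_option maxRecDepth 100000 in
theorem stmt2 (q : ℝ) (hq0 : 0 < q) (hq1 : q < 1)
    (th1 th2 th3 tl1 tl2 tl3 tb ta μ0 a : ℝ) (t1 t2 t3 : ℂ)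
    (ht1 : t1 ≠ 0) (ht2 : t2 ≠ 0) (ht3 : t3 ≠ 0)
    (χ ν μ b l1 l2 l3 h1 h2 h3 : ℝ)
    (hχ : χ = (th1 + th2 + th3 - tl1 - tl2 - tl3 - tb) / 2)
    (hν : ν = 2 * μ0 + a - ta + χ)
    (hμ : μ = μ0 + χ + 1)
    (hb : b = -tb - χ)
    (hl1 : l1 = th1 + μ0) (hl2 : l2 = th2 + μ0) (hl3 : l3 = th3 + μ0)
    (hh1 : h1 = tl1 + μ0 + χ) (hh2 : h2 = tl2 + μ0 + χ) (hh3 : h3 = tl3 + μ0 + χ)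
    (P : ℂ → ℂ → ℂ)
    (hPa : ∀ x s : ℂ, x ≠ 0 → s ≠ 0 → P x (s / (q : ℂ)) = P ((q : ℂ) * x) s)
    (hPb : ∀ x s : ℂ, x ≠ 0 → s ≠ 0 → P x ((q : ℂ) * s) = P (x / (q : ℂ)) s)
    (hPc : ∀ x s : ℂ, x ≠ 0 → s ≠ 0 →
      (x - qpow q (μ0 - 1) * s) * P x (s / (q : ℂ)) = (x - qpow q (μ - 1) * s) * P x s)
    (hPd : ∀ x s : ℂ, x ≠ 0 → s ≠ 0 →
      (x - qpow q μ * s) * P x ((q : ℂ) * s) = (x - qpow q μ0 * s) * P x s)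
    (Φ : ℂ → ℂ → ℂ)
    (hΦ : ∀ x s : ℂ, Φ x s = x ^ ((-a : ℝ) : ℂ) * s ^ ((χ + 1 - ta : ℝ) : ℂ) * P x s)
    (x s : ℂ) (hx : x ≠ 0) (hs : s ≠ 0)
    (hres1 : x ≠ qpow q (μ0 - 1) * s) (hres2 : x ≠ qpow q μ * s) :
    A3 q t1 t2 t3 h1 h2 h3 l1 l2 l3 a b (fun y => Φ y s) x
      = qpow q ν * A3 q t1 t2 t3 th1 th2 th3 tl1 tl2 tl3 ta tb (fun u => Φ x u) s := by
  have hqC : (q : ℂ) ≠ 0 := by exact_mod_cast hq0.ne'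
  have hden1 : x - qpow q (μ0 - 1) * s ≠ 0 := sub_ne_zero.mpr hres1
  have hden2 : x - qpow q μ * s ≠ 0 := sub_ne_zero.mpr hres2
  have hPqs : P x ((q : ℂ) * s) = (x - qpow q μ0 * s) * P x s / (x - qpow q μ * s) := by
    rw [eq_div_iff hden2]; linear_combination hPd x s hx hs
  have hPsq : P x (s / (q : ℂ)) = (x - qpow q (μ - 1) * s) * P x s / (x - qpow q (μ0 - 1) * s) := by
    rw [eq_div_iff hden1]; linear_combination hPc x s hx hs
  have hPl : P (x / (q : ℂ)) s = (x - qpow q μ0 * s) * P x s / (x - qpow q μ * s) := by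
    rw [← hPb x s hx hs, hPqs]
  have hPr : P ((q : ℂ) * x) s = (x - qpow q (μ - 1) * s) * P x s / (x - qpow q (μ0 - 1) * s) := by
    rw [← hPa x s hx hs, hPsq]
  simp only [A3, hΦ]
  rw [hPl, hPr, hPqs, hPsq]
  rw [cpow_qdiv hq0 hx, cpow_qmul hq0 hx, cpow_qdiv hq0 hs, cpow_qmul hq0 hs]
  have cv1 : ((q : ℂ) ^ (((-a : ℝ)) : ℂ)) = qpow q (-a) := rfl
  have cv2 : ((q : ℂ) ^ ((χ + 1 - ta : ℝ) : ℂ)) = qpow q (χ + 1 - ta) := rfl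
  rw [cv1, cv2]
  set XA := x ^ (((-a : ℝ)) : ℂ) with hXA
  set SC := s ^ ((χ + 1 - ta : ℝ) : ℂ) with hSC
  set PP := P x s with hPP
  have EE0 : qpow q (h1 + 1/2) = qpow q (1/4) ^ 2 * qpow q (th1/4) ^ 2 * qpow q (th2/4) ^ 2 * qpow q (th3/4) ^ 2 * qpow q (tl1/4) ^ 2 * qpow q μ0 / (qpow q (tl2/4) ^ 2 * qpow q (tl3/4) ^ 2 * qpow q (tb/4) ^ 2) := by
    rw [qpow_mono hq0 (1/4 : ℝ) (th1/4) (th2/4) (th3/4) (tl1/4) (tl2/4) (tl3/4) (tb/4) μ0 a ta 2 2 2 2 2 0 0 0 1 0 0 0 0 0 0 0 2 2 2 0 0 0 (h1 + 1/2) (by first | (simp only [hh1, hh2, hh3, hl1, hl2, hl3, hχ, hμ, hb, hν]; push_cast; ring) | (push_cast; ring))] <;> try ring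
  have EE1 : qpow q (l1 - 1/2) = qpow q (th1/4) ^ 4 * qpow q μ0 / (qpow q (1/4) ^ 2) := by
    rw [qpow_mono hq0 (1/4 : ℝ) (th1/4) (th2/4) (th3/4) (tl1/4) (tl2/4) (tl3/4) (tb/4) μ0 a ta 0 4 0 0 0 0 0 0 1 0 0 2 0 0 0 0 0 0 0 0 0 0 (l1 - 1/2) (by first | (simp only [hh1, hh2, hh3, hl1, hl2, hl3, hχ, hμ, hb, hν]; push_cast; ring) | (push_cast; ring))] <;> try ring
  have EE2 : qpow q (h2 + 1/2) = qpow q (1/4) ^ 2 * qpow q (th1/4) ^ 2 * qpow q (th2/4) ^ 2 * qpow q (th3/4) ^ 2 * qpow q (tl2/4) ^ 2 * qpow q μ0 / (qpow q (tl1/4) ^ 2 * qpow q (tl3/4) ^ 2 * qpow q (tb/4) ^ 2) := by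
    rw [qpow_mono hq0 (1/4 : ℝ) (th1/4) (th2/4) (th3/4) (tl1/4) (tl2/4) (tl3/4) (tb/4) μ0 a ta 2 2 2 2 0 2 0 0 1 0 0 0 0 0 0 2 0 2 2 0 0 0 (h2 + 1/2) (by first | (simp only [hh1, hh2, hh3, hl1, hl2, hl3, hχ, hμ, hb, hν]; push_cast; ring) | (push_cast; ring))] <;> try ring
  have EE3 : qpow q (l2 - 1/2) = qpow q (th2/4) ^ 4 * qpow q μ0 / (qpow q (1/4) ^ 2) := by
    rw [qpow_mono hq0 (1/4 : ℝ) (th1/4) (th2/4) (th3/4) (tl1/4) (tl2/4) (tl3/4) (tb/4) μ0 a ta 0 0 4 0 0 0 0 0 1 0 0 2 0 0 0 0 0 0 0 0 0 0 (l2 - 1/2) (by first | (simp only [hh1, hh2, hh3, hl1, hl2, hl3, hχ, hμ, hb, hν]; push_cast; ring) | (push_cast; ring))] <;> try ring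
  have EE4 : qpow q (h3 + 1/2) = qpow q (1/4) ^ 2 * qpow q (th1/4) ^ 2 * qpow q (th2/4) ^ 2 * qpow q (th3/4) ^ 2 * qpow q (tl3/4) ^ 2 * qpow q μ0 / (qpow q (tl1/4) ^ 2 * qpow q (tl2/4) ^ 2 * qpow q (tb/4) ^ 2) := by
    rw [qpow_mono hq0 (1/4 : ℝ) (th1/4) (th2/4) (th3/4) (tl1/4) (tl2/4) (tl3/4) (tb/4) μ0 a ta 2 2 2 2 0 0 2 0 1 0 0 0 0 0 0 2 2 0 2 0 0 0 (h3 + 1/2) (by first | (simp only [hh1, hh2, hh3, hl1, hl2, hl3, hχ, hμ, hb, hν]; push_cast; ring) | (push_cast; ring))] <;> try ring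
  have EE5 : qpow q (l3 - 1/2) = qpow q (th3/4) ^ 4 * qpow q μ0 / (qpow q (1/4) ^ 2) := by
    rw [qpow_mono hq0 (1/4 : ℝ) (th1/4) (th2/4) (th3/4) (tl1/4) (tl2/4) (tl3/4) (tb/4) μ0 a ta 0 0 0 4 0 0 0 0 1 0 0 2 0 0 0 0 0 0 0 0 0 0 (l3 - 1/2) (by first | (simp only [hh1, hh2, hh3, hl1, hl2, hl3, hχ, hμ, hb, hν]; push_cast; ring) | (push_cast; ring))] <;> try ring
  have EE6 : qpow q (2*a + 1) = qpow q (1/4) ^ 4 * qpow q a ^ 2 := by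
    rw [qpow_mono hq0 (1/4 : ℝ) (th1/4) (th2/4) (th3/4) (tl1/4) (tl2/4) (tl3/4) (tb/4) μ0 a ta 4 0 0 0 0 0 0 0 0 2 0 0 0 0 0 0 0 0 0 0 0 0 (2*a + 1) (by first | (simp only [hh1, hh2, hh3, hl1, hl2, hl3, hχ, hμ, hb, hν]; push_cast; ring) | (push_cast; ring))] <;> try ring
  have EE7 : qpow q (a + 1/2) = qpow q (1/4) ^ 2 * qpow q a := by
    rw [qpow_mono hq0 (1/4 : ℝ) (th1/4) (th2/4) (th3/4) (tl1/4) (tl2/4) (tl3/4) (tb/4) μ0 a ta 2 0 0 0 0 0 0 0 0 1 0 0 0 0 0 0 0 0 0 0 0 0 (a + 1/2) (by first | (simp only [hh1, hh2, hh3, hl1, hl2, hl3, hχ, hμ, hb, hν]; push_cast; ring) | (push_cast; ring))] <;> try ring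
  have EE8 : qpow q (1/2) = qpow q (1/4) ^ 2 := by
    rw [qpow_mono hq0 (1/4 : ℝ) (th1/4) (th2/4) (th3/4) (tl1/4) (tl2/4) (tl3/4) (tb/4) μ0 a ta 2 0 0 0 0 0 0 0 0 0 0 0 0 0 0 0 0 0 0 0 0 0 (1/2) (by first | (simp only [hh1, hh2, hh3, hl1, hl2, hl3, hχ, hμ, hb, hν]; push_cast; ring) | (push_cast; ring))] <;> try ring
  have EE9 : qpow q (-(1/2)) = 1 / (qpow q (1/4) ^ 2) := by
    rw [qpow_mono hq0 (1/4 : ℝ) (th1/4) (th2/4) (th3/4) (tl1/4) (tl2/4) (tl3/4) (tb/4) μ0 a ta 0 0 0 0 0 0 0 0 0 0 0 2 0 0 0 0 0 0 0 0 0 0 (-(1/2)) (by first | (simp only [hh1, hh2, hh3, hl1, hl2, hl3, hχ, hμ, hb, hν]; push_cast; ring) | (push_cast; ring))] <;> try ring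
  have EE10 : qpow q (h1) = qpow q (th1/4) ^ 2 * qpow q (th2/4) ^ 2 * qpow q (th3/4) ^ 2 * qpow q (tl1/4) ^ 2 * qpow q μ0 / (qpow q (tl2/4) ^ 2 * qpow q (tl3/4) ^ 2 * qpow q (tb/4) ^ 2) := by
    rw [qpow_mono hq0 (1/4 : ℝ) (th1/4) (th2/4) (th3/4) (tl1/4) (tl2/4) (tl3/4) (tb/4) μ0 a ta 0 2 2 2 2 0 0 0 1 0 0 0 0 0 0 0 2 2 2 0 0 0 (h1) (by first | (simp only [hh1, hh2, hh3, hl1, hl2, hl3, hχ, hμ, hb, hν]; push_cast; ring) | (push_cast; ring))] <;> try ring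
  have EE11 : qpow q (l1) = qpow q (th1/4) ^ 4 * qpow q μ0 := by
    rw [qpow_mono hq0 (1/4 : ℝ) (th1/4) (th2/4) (th3/4) (tl1/4) (tl2/4) (tl3/4) (tb/4) μ0 a ta 0 4 0 0 0 0 0 0 1 0 0 0 0 0 0 0 0 0 0 0 0 0 (l1) (by first | (simp only [hh1, hh2, hh3, hl1, hl2, hl3, hχ, hμ, hb, hν]; push_cast; ring) | (push_cast; ring))] <;> try ring
  have EE12 : qpow q (h2) = qpow q (th1/4) ^ 2 * qpow q (th2/4) ^ 2 * qpow q (th3/4) ^ 2 * qpow q (tl2/4) ^ 2 * qpow q μ0 / (qpow q (tl1/4) ^ 2 * qpow q (tl3/4) ^ 2 * qpow q (tb/4) ^ 2) := by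
    rw [qpow_mono hq0 (1/4 : ℝ) (th1/4) (th2/4) (th3/4) (tl1/4) (tl2/4) (tl3/4) (tb/4) μ0 a ta 0 2 2 2 0 2 0 0 1 0 0 0 0 0 0 2 0 2 2 0 0 0 (h2) (by first | (simp only [hh1, hh2, hh3, hl1, hl2, hl3, hχ, hμ, hb, hν]; push_cast; ring) | (push_cast; ring))] <;> try ring
  have EE13 : qpow q (l2) = qpow q (th2/4) ^ 4 * qpow q μ0 := by
    rw [qpow_mono hq0 (1/4 : ℝ) (th1/4) (th2/4) (th3/4) (tl1/4) (tl2/4) (tl3/4) (tb/4) μ0 a ta 0 0 4 0 0 0 0 0 1 0 0 0 0 0 0 0 0 0 0 0 0 0 (l2) (by first | (simp only [hh1, hh2, hh3, hl1, hl2, hl3, hχ, hμ, hb, hν]; push_cast; ring) | (push_cast; ring))] <;> try ring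
  have EE14 : qpow q (h3) = qpow q (th1/4) ^ 2 * qpow q (th2/4) ^ 2 * qpow q (th3/4) ^ 2 * qpow q (tl3/4) ^ 2 * qpow q μ0 / (qpow q (tl1/4) ^ 2 * qpow q (tl2/4) ^ 2 * qpow q (tb/4) ^ 2) := by
    rw [qpow_mono hq0 (1/4 : ℝ) (th1/4) (th2/4) (th3/4) (tl1/4) (tl2/4) (tl3/4) (tb/4) μ0 a ta 0 2 2 2 0 0 2 0 1 0 0 0 0 0 0 2 2 0 2 0 0 0 (h3) (by first | (simp only [hh1, hh2, hh3, hl1, hl2, hl3, hχ, hμ, hb, hν]; push_cast; ring) | (push_cast; ring))] <;> try ring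
  have EE15 : qpow q (l3) = qpow q (th3/4) ^ 4 * qpow q μ0 := by
    rw [qpow_mono hq0 (1/4 : ℝ) (th1/4) (th2/4) (th3/4) (tl1/4) (tl2/4) (tl3/4) (tb/4) μ0 a ta 0 0 0 4 0 0 0 0 1 0 0 0 0 0 0 0 0 0 0 0 0 0 (l3) (by first | (simp only [hh1, hh2, hh3, hl1, hl2, hl3, hχ, hμ, hb, hν]; push_cast; ring) | (push_cast; ring))] <;> try ring
  have EE16 : qpow q ((l1 + l2 + l3 + h1 + h2 + h3) / 2) = qpow q (th1/4) ^ 5 * qpow q (th2/4) ^ 5 * qpow q (th3/4) ^ 5 * qpow q μ0 ^ 3 / (qpow q (tl1/4) * qpow q (tl2/4) * qpow q (tl3/4) * qpow q (tb/4) ^ 3) := by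
    rw [qpow_mono hq0 (1/4 : ℝ) (th1/4) (th2/4) (th3/4) (tl1/4) (tl2/4) (tl3/4) (tb/4) μ0 a ta 0 5 5 5 0 0 0 0 3 0 0 0 0 0 0 1 1 1 3 0 0 0 ((l1 + l2 + l3 + h1 + h2 + h3) / 2) (by first | (simp only [hh1, hh2, hh3, hl1, hl2, hl3, hχ, hμ, hb, hν]; push_cast; ring) | (push_cast; ring))] <;> try ring
  have EE17 : qpow q (b / 2) = qpow q (tl1/4) * qpow q (tl2/4) * qpow q (tl3/4) / (qpow q (th1/4) * qpow q (th2/4) * qpow q (th3/4) * qpow q (tb/4)) := by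
    rw [qpow_mono hq0 (1/4 : ℝ) (th1/4) (th2/4) (th3/4) (tl1/4) (tl2/4) (tl3/4) (tb/4) μ0 a ta 0 0 0 0 1 1 1 0 0 0 0 0 1 1 1 0 0 0 1 0 0 0 (b / 2) (by first | (simp only [hh1, hh2, hh3, hl1, hl2, hl3, hχ, hμ, hb, hν]; push_cast; ring) | (push_cast; ring))] <;> try ring
  have EE18 : qpow q (-(b / 2)) = qpow q (th1/4) * qpow q (th2/4) * qpow q (th3/4) * qpow q (tb/4) / (qpow q (tl1/4) * qpow q (tl2/4) * qpow q (tl3/4)) := by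
    rw [qpow_mono hq0 (1/4 : ℝ) (th1/4) (th2/4) (th3/4) (tl1/4) (tl2/4) (tl3/4) (tb/4) μ0 a ta 0 1 1 1 0 0 0 1 0 0 0 0 0 0 0 1 1 1 0 0 0 0 (-(b / 2)) (by first | (simp only [hh1, hh2, hh3, hl1, hl2, hl3, hχ, hμ, hb, hν]; push_cast; ring) | (push_cast; ring))] <;> try ring
  have EE19 : qpow q (-a) = 1 / (qpow q a) := by
    rw [qpow_mono hq0 (1/4 : ℝ) (th1/4) (th2/4) (th3/4) (tl1/4) (tl2/4) (tl3/4) (tb/4) μ0 a ta 0 0 0 0 0 0 0 0 0 0 0 0 0 0 0 0 0 0 0 0 1 0 (-a) (by first | (simp only [hh1, hh2, hh3, hl1, hl2, hl3, hχ, hμ, hb, hν]; push_cast; ring) | (push_cast; ring))] <;> try ring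
  have EE20 : qpow q (χ + 1 - ta) = qpow q (1/4) ^ 4 * qpow q (th1/4) ^ 2 * qpow q (th2/4) ^ 2 * qpow q (th3/4) ^ 2 / (qpow q (tl1/4) ^ 2 * qpow q (tl2/4) ^ 2 * qpow q (tl3/4) ^ 2 * qpow q (tb/4) ^ 2 * qpow q ta) := by
    rw [qpow_mono hq0 (1/4 : ℝ) (th1/4) (th2/4) (th3/4) (tl1/4) (tl2/4) (tl3/4) (tb/4) μ0 a ta 4 2 2 2 0 0 0 0 0 0 0 0 0 0 0 2 2 2 2 0 0 1 (χ + 1 - ta) (by first | (simp only [hh1, hh2, hh3, hl1, hl2, hl3, hχ, hμ, hb, hν]; push_cast; ring) | (push_cast; ring))] <;> try ring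
  have EE21 : qpow q (μ0) = qpow q μ0 := by
    rw [qpow_mono hq0 (1/4 : ℝ) (th1/4) (th2/4) (th3/4) (tl1/4) (tl2/4) (tl3/4) (tb/4) μ0 a ta 0 0 0 0 0 0 0 0 1 0 0 0 0 0 0 0 0 0 0 0 0 0 (μ0) (by first | (simp only [hh1, hh2, hh3, hl1, hl2, hl3, hχ, hμ, hb, hν]; push_cast; ring) | (push_cast; ring))] <;> try ring
  have EE22 : qpow q (μ0 - 1) = qpow q μ0 / (qpow q (1/4) ^ 4) := by
    rw [qpow_mono hq0 (1/4 : ℝ) (th1/4) (th2/4) (th3/4) (tl1/4) (tl2/4) (tl3/4) (tb/4) μ0 a ta 0 0 0 0 0 0 0 0 1 0 0 4 0 0 0 0 0 0 0 0 0 0 (μ0 - 1) (by first | (simp only [hh1, hh2, hh3, hl1, hl2, hl3, hχ, hμ, hb, hν]; push_cast; ring) | (push_cast; ring))] <;> try ring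
  have EE23 : qpow q (μ) = qpow q (1/4) ^ 4 * qpow q (th1/4) ^ 2 * qpow q (th2/4) ^ 2 * qpow q (th3/4) ^ 2 * qpow q μ0 / (qpow q (tl1/4) ^ 2 * qpow q (tl2/4) ^ 2 * qpow q (tl3/4) ^ 2 * qpow q (tb/4) ^ 2) := by
    rw [qpow_mono hq0 (1/4 : ℝ) (th1/4) (th2/4) (th3/4) (tl1/4) (tl2/4) (tl3/4) (tb/4) μ0 a ta 4 2 2 2 0 0 0 0 1 0 0 0 0 0 0 2 2 2 2 0 0 0 (μ) (by first | (simp only [hh1, hh2, hh3, hl1, hl2, hl3, hχ, hμ, hb, hν]; push_cast; ring) | (push_cast; ring))] <;> try ring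
  have EE24 : qpow q (μ - 1) = qpow q (th1/4) ^ 2 * qpow q (th2/4) ^ 2 * qpow q (th3/4) ^ 2 * qpow q μ0 / (qpow q (tl1/4) ^ 2 * qpow q (tl2/4) ^ 2 * qpow q (tl3/4) ^ 2 * qpow q (tb/4) ^ 2) := by
    rw [qpow_mono hq0 (1/4 : ℝ) (th1/4) (th2/4) (th3/4) (tl1/4) (tl2/4) (tl3/4) (tb/4) μ0 a ta 0 2 2 2 0 0 0 0 1 0 0 0 0 0 0 2 2 2 2 0 0 0 (μ - 1) (by first | (simp only [hh1, hh2, hh3, hl1, hl2, hl3, hχ, hμ, hb, hν]; push_cast; ring) | (push_cast; ring))] <;> try ring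
  have EE25 : qpow q (th1 + 1/2) = qpow q (1/4) ^ 2 * qpow q (th1/4) ^ 4 := by
    rw [qpow_mono hq0 (1/4 : ℝ) (th1/4) (th2/4) (th3/4) (tl1/4) (tl2/4) (tl3/4) (tb/4) μ0 a ta 2 4 0 0 0 0 0 0 0 0 0 0 0 0 0 0 0 0 0 0 0 0 (th1 + 1/2) (by first | (simp only [hh1, hh2, hh3, hl1, hl2, hl3, hχ, hμ, hb, hν]; push_cast; ring) | (push_cast; ring))] <;> try ring
  have EE26 : qpow q (tl1 - 1/2) = qpow q (tl1/4) ^ 4 / (qpow q (1/4) ^ 2) := by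
    rw [qpow_mono hq0 (1/4 : ℝ) (th1/4) (th2/4) (th3/4) (tl1/4) (tl2/4) (tl3/4) (tb/4) μ0 a ta 0 0 0 0 4 0 0 0 0 0 0 2 0 0 0 0 0 0 0 0 0 0 (tl1 - 1/2) (by first | (simp only [hh1, hh2, hh3, hl1, hl2, hl3, hχ, hμ, hb, hν]; push_cast; ring) | (push_cast; ring))] <;> try ring
  have EE27 : qpow q (th2 + 1/2) = qpow q (1/4) ^ 2 * qpow q (th2/4) ^ 4 := by
    rw [qpow_mono hq0 (1/4 : ℝ) (th1/4) (th2/4) (th3/4) (tl1/4) (tl2/4) (tl3/4) (tb/4) μ0 a ta 2 0 4 0 0 0 0 0 0 0 0 0 0 0 0 0 0 0 0 0 0 0 (th2 + 1/2) (by first | (simp only [hh1, hh2, hh3, hl1, hl2, hl3, hχ, hμ, hb, hν]; push_cast; ring) | (push_cast; ring))] <;> try ring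
  have EE28 : qpow q (tl2 - 1/2) = qpow q (tl2/4) ^ 4 / (qpow q (1/4) ^ 2) := by
    rw [qpow_mono hq0 (1/4 : ℝ) (th1/4) (th2/4) (th3/4) (tl1/4) (tl2/4) (tl3/4) (tb/4) μ0 a ta 0 0 0 0 0 4 0 0 0 0 0 2 0 0 0 0 0 0 0 0 0 0 (tl2 - 1/2) (by first | (simp only [hh1, hh2, hh3, hl1, hl2, hl3, hχ, hμ, hb, hν]; push_cast; ring) | (push_cast; ring))] <;> try ring
  have EE29 : qpow q (th3 + 1/2) = qpow q (1/4) ^ 2 * qpow q (th3/4) ^ 4 := by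
    rw [qpow_mono hq0 (1/4 : ℝ) (th1/4) (th2/4) (th3/4) (tl1/4) (tl2/4) (tl3/4) (tb/4) μ0 a ta 2 0 0 4 0 0 0 0 0 0 0 0 0 0 0 0 0 0 0 0 0 0 (th3 + 1/2) (by first | (simp only [hh1, hh2, hh3, hl1, hl2, hl3, hχ, hμ, hb, hν]; push_cast; ring) | (push_cast; ring))] <;> try ring
  have EE30 : qpow q (tl3 - 1/2) = qpow q (tl3/4) ^ 4 / (qpow q (1/4) ^ 2) := by
    rw [qpow_mono hq0 (1/4 : ℝ) (th1/4) (th2/4) (th3/4) (tl1/4) (tl2/4) (tl3/4) (tb/4) μ0 a ta 0 0 0 0 0 0 4 0 0 0 0 2 0 0 0 0 0 0 0 0 0 0 (tl3 - 1/2) (by first | (simp only [hh1, hh2, hh3, hl1, hl2, hl3, hχ, hμ, hb, hν]; push_cast; ring) | (push_cast; ring))] <;> try ring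
  have EE31 : qpow q (2*ta + 1) = qpow q (1/4) ^ 4 * qpow q ta ^ 2 := by
    rw [qpow_mono hq0 (1/4 : ℝ) (th1/4) (th2/4) (th3/4) (tl1/4) (tl2/4) (tl3/4) (tb/4) μ0 a ta 4 0 0 0 0 0 0 0 0 0 2 0 0 0 0 0 0 0 0 0 0 0 (2*ta + 1) (by first | (simp only [hh1, hh2, hh3, hl1, hl2, hl3, hχ, hμ, hb, hν]; push_cast; ring) | (push_cast; ring))] <;> try ring
  have EE32 : qpow q (ta + 1/2) = qpow q (1/4) ^ 2 * qpow q ta := by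
    rw [qpow_mono hq0 (1/4 : ℝ) (th1/4) (th2/4) (th3/4) (tl1/4) (tl2/4) (tl3/4) (tb/4) μ0 a ta 2 0 0 0 0 0 0 0 0 0 1 0 0 0 0 0 0 0 0 0 0 0 (ta + 1/2) (by first | (simp only [hh1, hh2, hh3, hl1, hl2, hl3, hχ, hμ, hb, hν]; push_cast; ring) | (push_cast; ring))] <;> try ring
  have EE33 : qpow q (th1) = qpow q (th1/4) ^ 4 := by
    rw [qpow_mono hq0 (1/4 : ℝ) (th1/4) (th2/4) (th3/4) (tl1/4) (tl2/4) (tl3/4) (tb/4) μ0 a ta 0 4 0 0 0 0 0 0 0 0 0 0 0 0 0 0 0 0 0 0 0 0 (th1) (by first | (simp only [hh1, hh2, hh3, hl1, hl2, hl3, hχ, hμ, hb, hν]; push_cast; ring) | (push_cast; ring))] <;> try ring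
  have EE34 : qpow q (tl1) = qpow q (tl1/4) ^ 4 := by
    rw [qpow_mono hq0 (1/4 : ℝ) (th1/4) (th2/4) (th3/4) (tl1/4) (tl2/4) (tl3/4) (tb/4) μ0 a ta 0 0 0 0 4 0 0 0 0 0 0 0 0 0 0 0 0 0 0 0 0 0 (tl1) (by first | (simp only [hh1, hh2, hh3, hl1, hl2, hl3, hχ, hμ, hb, hν]; push_cast; ring) | (push_cast; ring))] <;> try ring
  have EE35 : qpow q (th2) = qpow q (th2/4) ^ 4 := by
    rw [qpow_mono hq0 (1/4 : ℝ) (th1/4) (th2/4) (th3/4) (tl1/4) (tl2/4) (tl3/4) (tb/4) μ0 a ta 0 0 4 0 0 0 0 0 0 0 0 0 0 0 0 0 0 0 0 0 0 0 (th2) (by first | (simp only [hh1, hh2, hh3, hl1, hl2, hl3, hχ, hμ, hb, hν]; push_cast; ring) | (push_cast; ring))] <;> try ring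
  have EE36 : qpow q (tl2) = qpow q (tl2/4) ^ 4 := by
    rw [qpow_mono hq0 (1/4 : ℝ) (th1/4) (th2/4) (th3/4) (tl1/4) (tl2/4) (tl3/4) (tb/4) μ0 a ta 0 0 0 0 0 4 0 0 0 0 0 0 0 0 0 0 0 0 0 0 0 0 (tl2) (by first | (simp only [hh1, hh2, hh3, hl1, hl2, hl3, hχ, hμ, hb, hν]; push_cast; ring) | (push_cast; ring))] <;> try ring
  have EE37 : qpow q (th3) = qpow q (th3/4) ^ 4 := by
    rw [qpow_mono hq0 (1/4 : ℝ) (th1/4) (th2/4) (th3/4) (tl1/4) (tl2/4) (tl3/4) (tb/4) μ0 a ta 0 0 0 4 0 0 0 0 0 0 0 0 0 0 0 0 0 0 0 0 0 0 (th3) (by first | (simp only [hh1, hh2, hh3, hl1, hl2, hl3, hχ, hμ, hb, hν]; push_cast; ring) | (push_cast; ring))] <;> try ring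
  have EE38 : qpow q (tl3) = qpow q (tl3/4) ^ 4 := by
    rw [qpow_mono hq0 (1/4 : ℝ) (th1/4) (th2/4) (th3/4) (tl1/4) (tl2/4) (tl3/4) (tb/4) μ0 a ta 0 0 0 0 0 0 4 0 0 0 0 0 0 0 0 0 0 0 0 0 0 0 (tl3) (by first | (simp only [hh1, hh2, hh3, hl1, hl2, hl3, hχ, hμ, hb, hν]; push_cast; ring) | (push_cast; ring))] <;> try ring
  have EE39 : qpow q ((tl1 + tl2 + tl3 + th1 + th2 + th3) / 2) = qpow q (th1/4) ^ 2 * qpow q (th2/4) ^ 2 * qpow q (th3/4) ^ 2 * qpow q (tl1/4) ^ 2 * qpow q (tl2/4) ^ 2 * qpow q (tl3/4) ^ 2 := by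
    rw [qpow_mono hq0 (1/4 : ℝ) (th1/4) (th2/4) (th3/4) (tl1/4) (tl2/4) (tl3/4) (tb/4) μ0 a ta 0 2 2 2 2 2 2 0 0 0 0 0 0 0 0 0 0 0 0 0 0 0 ((tl1 + tl2 + tl3 + th1 + th2 + th3) / 2) (by first | (simp only [hh1, hh2, hh3, hl1, hl2, hl3, hχ, hμ, hb, hν]; push_cast; ring) | (push_cast; ring))] <;> try ring
  have EE40 : qpow q (tb / 2) = qpow q (tb/4) ^ 2 := by
    rw [qpow_mono hq0 (1/4 : ℝ) (th1/4) (th2/4) (th3/4) (tl1/4) (tl2/4) (tl3/4) (tb/4) μ0 a ta 0 0 0 0 0 0 0 2 0 0 0 0 0 0 0 0 0 0 0 0 0 0 (tb / 2) (by first | (simp only [hh1, hh2, hh3, hl1, hl2, hl3, hχ, hμ, hb, hν]; push_cast; ring) | (push_cast; ring))] <;> try ring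
  have EE41 : qpow q (-(tb / 2)) = 1 / (qpow q (tb/4) ^ 2) := by
    rw [qpow_mono hq0 (1/4 : ℝ) (th1/4) (th2/4) (th3/4) (tl1/4) (tl2/4) (tl3/4) (tb/4) μ0 a ta 0 0 0 0 0 0 0 0 0 0 0 0 0 0 0 0 0 0 2 0 0 0 (-(tb / 2)) (by first | (simp only [hh1, hh2, hh3, hl1, hl2, hl3, hχ, hμ, hb, hν]; push_cast; ring) | (push_cast; ring))] <;> try ring
  have EE42 : qpow q (ν) = qpow q (th1/4) ^ 2 * qpow q (th2/4) ^ 2 * qpow q (th3/4) ^ 2 * qpow q μ0 ^ 2 * qpow q a / (qpow q (tl1/4) ^ 2 * qpow q (tl2/4) ^ 2 * qpow q (tl3/4) ^ 2 * qpow q (tb/4) ^ 2 * qpow q ta) := by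
    rw [qpow_mono hq0 (1/4 : ℝ) (th1/4) (th2/4) (th3/4) (tl1/4) (tl2/4) (tl3/4) (tb/4) μ0 a ta 0 2 2 2 0 0 0 0 2 1 0 0 0 0 0 2 2 2 2 0 0 1 (ν) (by first | (simp only [hh1, hh2, hh3, hl1, hl2, hl3, hχ, hμ, hb, hν]; push_cast; ring) | (push_cast; ring))] <;> try ring
  simp only [EE0, EE1, EE2, EE3, EE4, EE5, EE6, EE7, EE8, EE9, EE10, EE11, EE12, EE13, EE14, EE15, EE16, EE17, EE18, EE19, EE20, EE21, EE22, EE23, EE24, EE25, EE26, EE27, EE28, EE29, EE30, EE31, EE32, EE33, EE34, EE35, EE36, EE37, EE38, EE39, EE40, EE41, EE42]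
  set U := qpow q (1/4 : ℝ) with hU
  set V1 := qpow q (th1/4) with hV1
  set V2 := qpow q (th2/4) with hV2
  set V3 := qpow q (th3/4) with hV3
  set W1 := qpow q (tl1/4) with hW1
  set W2 := qpow q (tl2/4) with hW2
  set W3 := qpow q (tl3/4) with hW3
  set KK := qpow q (tb/4) with hKK
  set MM := qpow q μ0 with hMM
  set EA := qpow q a with hEA
  set TA := qpow q ta with hTA
  have hne0 : U ≠ 0 := by rw [hU]; exact qpow_ne_zero hq0 _
  have hne1 : V1 ≠ 0 := by rw [hV1]; exact qpow_ne_zero hq0 _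
  have hne2 : V2 ≠ 0 := by rw [hV2]; exact qpow_ne_zero hq0 _
  have hne3 : V3 ≠ 0 := by rw [hV3]; exact qpow_ne_zero hq0 _
  have hne4 : W1 ≠ 0 := by rw [hW1]; exact qpow_ne_zero hq0 _
  have hne5 : W2 ≠ 0 := by rw [hW2]; exact qpow_ne_zero hq0 _
  have hne6 : W3 ≠ 0 := by rw [hW3]; exact qpow_ne_zero hq0 _
  have hne7 : KK ≠ 0 := by rw [hKK]; exact qpow_ne_zero hq0 _
  have hne8 : MM ≠ 0 := by rw [hMM]; exact qpow_ne_zero hq0 _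
  have hne9 : EA ≠ 0 := by rw [hEA]; exact qpow_ne_zero hq0 _
  have hne10 : TA ≠ 0 := by rw [hTA]; exact qpow_ne_zero hq0 _
  have hD1 : x * U ^ 4 - MM * s ≠ 0 := by
    intro h
    apply hden1
    rw [EE22]
    field_simp [hne0, hne1, hne2, hne3, hne4, hne5, hne6, hne7, hne8, hne9, hne10]
    first | linear_combination h | linear_combination -h | linear_combination s * h | linear_combination (-s) * h
  have hD2 : x * (W1 ^ 2 * W2 ^ 2 * W3 ^ 2 * KK ^ 2) - U ^ 4 * V1 ^ 2 * V2 ^ 2 * V3 ^ 2 * MM * s ≠ 0 := by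
    intro h
    apply hden2
    rw [EE23]
    field_simp [hne0, hne1, hne2, hne3, hne4, hne5, hne6, hne7, hne8, hne9, hne10]
    first | linear_combination h | linear_combination -h | linear_combination s * h | linear_combination (-s) * h
  have hsub1 : x - MM / U ^ 4 * s = (x * U ^ 4 - MM * s) / U ^ 4 := by
    field_simp [hne0, hne1, hne2, hne3, hne4, hne5, hne6, hne7, hne8, hne9, hne10]
    try ring
  have hsub2 : x - U ^ 4 * V1 ^ 2 * V2 ^ 2 * V3 ^ 2 * MM / (W1 ^ 2 * W2 ^ 2 * W3 ^ 2 * KK ^ 2) * s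
      = (x * (W1 ^ 2 * W2 ^ 2 * W3 ^ 2 * KK ^ 2) - U ^ 4 * V1 ^ 2 * V2 ^ 2 * V3 ^ 2 * MM * s)
        / (W1 ^ 2 * W2 ^ 2 * W3 ^ 2 * KK ^ 2) := by
    field_simp [hne0, hne1, hne2, hne3, hne4, hne5, hne6, hne7, hne8, hne9, hne10]
    try ring
  rw [hsub1, hsub2]
  have hD2' : x * W1 ^ 2 * W2 ^ 2 * W3 ^ 2 * KK ^ 2 - U ^ 4 * V1 ^ 2 * V2 ^ 2 * V3 ^ 2 * MM * s ≠ 0 := by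
    convert hD2 using 1; ring
  field_simp [hx, hs, hD1, hD2, hD2', hne0, hne1, hne2, hne3, hne4, hne5, hne6, hne7, hne8, hne9, hne10]
  ring
end

section
/- Let 0<q<1 be real, μ,μ0 real, and let x,ξ be nonzero complex numbers with x ∉ {q^{μ0+n}ξ : n ∈ ℤ} and x ∉ {q^{μ+n}ξ : n ∈ ℤ}. Then: (a) P²_{μ,μ0}(x,q^{L}ξ) tends to (x/ξ)^{μ−μ0}·θ_q(q^{−μ0+1}x/ξ)/θ_q(q^{−μ+1}x/ξ) as the integer L → +∞; (b) s^{μ−μ0}·P¹_{μ,μ0}(x,s) evaluated at s = q^{K−1}ξ tends to ξ^{μ−μ0}·θ_q(q^{−μ+1}x/ξ)/θ_q(q^{−μ0+1}x/ξ) as the integer K → −∞. -/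
open Filter Topology

/-- `P¹_{μ,μ0}(x,s) = (q^μ s/x;q)_∞ / (q^{μ0} s/x;q)_∞`. -/
noncomputable def P1 (q μ μ0 : ℝ) (x s : ℂ) : ℂ :=
  qPochInf q (qpow q μ * s / x) / qPochInf q (qpow q μ0 * s / x)

/-- `P²_{μ,μ0}(x,s) = (x/s)^{μ-μ0} (q^{-μ0+1} x/s;q)_∞ / (q^{-μ+1} x/s;q)_∞`. -/
noncomputable def P2 (q μ μ0 : ℝ) (x s : ℂ) : ℂ :=
  (x / s) ^ ((μ - μ0 : ℝ) : ℂ) *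
    (qPochInf q (qpow q (-μ0 + 1) * x / s) / qPochInf q (qpow q (-μ + 1) * x / s))

/-- The theta function `θ_q(t) = (t;q)_∞ (q/t;q)_∞ (q;q)_∞`. -/
noncomputable def thetaQ (q : ℝ) (t : ℂ) : ℂ :=
  qPochInf q t * qPochInf q ((q : ℂ) / t) * qPochInf q (q : ℂ)

section auxQP
variable {q : ℝ}

lemma summable_log (hq0 : 0 < q) (hq1 : q < 1) (c : ℂ) :
    Summable fun j : ℕ => Complex.log (1 - (q:ℂ)^j * c) := by
  apply Summable.of_norm_bounded_eventually_nat (g := fun j => 3/2 * (‖c‖ * q ^ j))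
  · exact ((summable_geometric_of_lt_one hq0.le hq1).mul_left _).mul_left _
  · have h0 : Tendsto (fun j : ℕ => ‖c‖ * q ^ j) atTop (nhds 0) :=
      by simpa using (tendsto_pow_atTop_nhds_zero_of_lt_one hq0.le hq1).const_mul ‖c‖
    filter_upwards [h0.eventually_le_const (by norm_num : (0:ℝ) < 1/2)] with j hj
    have hz : ‖-((q:ℂ)^j * c)‖ ≤ 1/2 := by
      rw [norm_neg, norm_mul, norm_pow, Complex.norm_real, Real.norm_of_nonneg hq0.le]
      rw [mul_comm]; exact hj
    have := Complex.norm_log_one_add_half_le_self hz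
    rw [show (1 : ℂ) + -((q:ℂ)^j * c) = 1 - (q:ℂ)^j * c by ring] at this
    refine this.trans ?_
    rw [norm_neg, norm_mul, norm_pow, Complex.norm_real, Real.norm_of_nonneg hq0.le]
    ring_nf; rfl

lemma multipliable_qp (hq0 : 0 < q) (hq1 : q < 1) (c : ℂ)
    (hc : ∀ j : ℕ, 1 - (q:ℂ)^j * c ≠ 0) :
    Multipliable fun j : ℕ => 1 - (q:ℂ)^j * c :=
  Complex.multipliable_of_summable_log (summable_log hq0 hq1 c)

lemma qPochInf_ne_zero (hq0 : 0 < q) (hq1 : q < 1) (c : ℂ)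
    (hc : ∀ j : ℕ, 1 - (q:ℂ)^j * c ≠ 0) : qPochInf q c ≠ 0 := by
  have := Complex.cexp_tsum_eq_tprod (f := fun j : ℕ => 1 - (q:ℂ)^j * c) hc
    (summable_log hq0 hq1 c)
  rw [qPochInf, ← this]
  exact Complex.exp_ne_zero _

lemma peel (c : ℂ) (hm : Multipliable fun j : ℕ => 1 - (q:ℂ)^j * ((q:ℂ) * c)) :
    qPochInf q c = (1 - c) * qPochInf q ((q:ℂ) * c) := by
  have hkey : ∀ j : ℕ, 1 - (q:ℂ)^(j+1) * c = 1 - (q:ℂ)^j * ((q:ℂ) * c) := by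
    intro j; rw [pow_succ]; ring
  have hm' : Multipliable fun j : ℕ => 1 - (q:ℂ)^(j+1) * c := by
    simpa only [hkey] using hm
  have h := tprod_eq_zero_mul' (f := fun j : ℕ => 1 - (q:ℂ)^j * c) hm'
  rw [qPochInf, h, qPochInf]
  simp only [pow_zero, one_mul]
  congr 1
  exact tprod_congr hkey

lemma hfac (hq0 : 0 < q) (a : ℂ) (haq : ∀ n : ℤ, a ≠ (q:ℂ)^n) (t : ℤ) (j : ℕ) :
    1 - (q:ℂ)^j * ((q:ℂ)^t * a) ≠ 0 := by
  have hq : (q:ℂ) ≠ 0 := Complex.ofReal_ne_zero.mpr hq0.ne'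
  rw [sub_ne_zero]
  intro h
  apply haq (-((j:ℤ) + t))
  rw [zpow_neg, zpow_add₀ hq, zpow_natCast]
  exact eq_inv_of_mul_eq_one_left (by linear_combination -h)

lemma hfacinv (hq0 : 0 < q) (a : ℂ) (ha0 : a ≠ 0) (haq : ∀ n : ℤ, a ≠ (q:ℂ)^n) (j : ℕ) :
    1 - (q:ℂ)^j * ((q:ℂ)/a) ≠ 0 := by
  rw [sub_ne_zero]
  intro h
  apply haq ((j:ℤ) + 1)
  have h' : (q:ℂ)^j * (q:ℂ) = a := by
    field_simp at h
    linear_combination -h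
  rw [← h', ← zpow_natCast (q:ℂ) j, ← zpow_add_one₀ (Complex.ofReal_ne_zero.mpr hq0.ne')]

lemma mult_shift (hq0 : 0 < q) (hq1 : q < 1) (a : ℂ) (haq : ∀ n : ℤ, a ≠ (q:ℂ)^n) (t : ℤ) :
    Multipliable fun j : ℕ => 1 - (q:ℂ)^j * ((q:ℂ)^t * a) :=
  multipliable_qp hq0 hq1 _ (hfac hq0 a haq t)

lemma formula (hq0 : 0 < q) (hq1 : q < 1) (a : ℂ) (ha0 : a ≠ 0)
    (haq : ∀ n : ℤ, a ≠ (q:ℂ)^n) (n : ℕ) :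
    qPochInf q ((q:ℂ)^(-(n:ℤ)) * a) =
      (∏ k ∈ Finset.range n, (-((q:ℂ)^(-(k:ℤ)-1) * a))) *
        ((∏ k ∈ Finset.range n, (1 - (q:ℂ)^k * ((q:ℂ)/a))) * qPochInf q a) := by
  have hq : (q:ℂ) ≠ 0 := Complex.ofReal_ne_zero.mpr hq0.ne'
  induction n with
  | zero => simp
  | succ n ih =>
    have e1 : (q:ℂ) * ((q:ℂ)^(-((n:ℤ)+1)) * a) = (q:ℂ)^(-(n:ℤ)) * a := by
      rw [← mul_assoc, mul_comm (q:ℂ) ((q:ℂ)^(-((n:ℤ)+1))), ← zpow_add_one₀ hq,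
        show (-((n:ℤ)+1)+1 : ℤ) = -(n:ℤ) from by ring]
    have hm : Multipliable fun j : ℕ => 1 - (q:ℂ)^j * ((q:ℂ) * ((q:ℂ)^(-((n:ℤ)+1)) * a)) := by
      simp only [e1]; exact mult_shift hq0 hq1 a haq (-(n:ℤ))
    have hpeel := peel ((q:ℂ)^(-((n:ℤ)+1)) * a) hm
    rw [e1] at hpeel
    have hcast : (-((n+1 : ℕ) : ℤ)) = -((n:ℤ)+1) := by push_cast; ring
    rw [hcast, hpeel, ih, Finset.prod_range_succ, Finset.prod_range_succ]
    have e2 : (1:ℂ) - (q:ℂ)^(-((n:ℤ)+1)) * a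
        = (-((q:ℂ)^(-(n:ℤ)-1) * a)) * (1 - (q:ℂ)^(n:ℕ) * ((q:ℂ)/a)) := by
      have h1 : (q:ℂ)^(-(n:ℤ)-1) * (q:ℂ)^(n:ℕ) * (q:ℂ) = 1 := by
        rw [← zpow_natCast (q:ℂ) n, ← zpow_add₀ hq, ← zpow_add_one₀ hq,
          show (-(n:ℤ)-1+(n:ℤ)+1 : ℤ) = 0 from by ring, zpow_zero]
      have h2 : (q:ℂ)^(-((n:ℤ)+1)) = (q:ℂ)^(-(n:ℤ)-1) := by
        rw [show (-((n:ℤ)+1) : ℤ) = -(n:ℤ)-1 from by ring]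
      have hinv : a * a⁻¹ = 1 := mul_inv_cancel₀ ha0
      rw [h2, div_eq_mul_inv]
      linear_combination (-(a * a⁻¹)) * h1 - hinv
    rw [e2]
    ring


lemma main_tendsto (hq0 : 0 < q) (hq1 : q < 1) (a b : ℂ) (ha0 : a ≠ 0) (hb0 : b ≠ 0)
    (haq : ∀ n : ℤ, a ≠ (q:ℂ)^n) (hbq : ∀ n : ℤ, b ≠ (q:ℂ)^n)
    (d : ℝ) (hab : a = ((q^d : ℝ) : ℂ) * b) :
    Tendsto (fun n : ℕ => (((q^d : ℝ) : ℂ))^(-(n:ℤ)) *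
        (qPochInf q ((q:ℂ)^(-(n:ℤ)) * a) / qPochInf q ((q:ℂ)^(-(n:ℤ)) * b)))
      atTop
      (nhds ((qPochInf q a * qPochInf q ((q:ℂ)/a)) /
        (qPochInf q b * qPochInf q ((q:ℂ)/b)))) := by
  have hq : (q:ℂ) ≠ 0 := Complex.ofReal_ne_zero.mpr hq0.ne'
  have hρ : ((q^d : ℝ) : ℂ) ≠ 0 :=
    Complex.ofReal_ne_zero.mpr (Real.rpow_pos_of_pos hq0 d).ne'
  have key : ∀ n : ℕ, (((q^d : ℝ) : ℂ))^(-(n:ℤ)) *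
      (qPochInf q ((q:ℂ)^(-(n:ℤ)) * a) / qPochInf q ((q:ℂ)^(-(n:ℤ)) * b))
      = ((∏ k ∈ Finset.range n, (1 - (q:ℂ)^k * ((q:ℂ)/a))) * qPochInf q a) /
        ((∏ k ∈ Finset.range n, (1 - (q:ℂ)^k * ((q:ℂ)/b))) * qPochInf q b) := by
    intro n
    rw [formula hq0 hq1 a ha0 haq n, formula hq0 hq1 b hb0 hbq n]
    have hA : (∏ k ∈ Finset.range n, -((q:ℂ)^(-(k:ℤ)-1) * a))
        = ((q^d : ℝ) : ℂ)^n * ∏ k ∈ Finset.range n, -((q:ℂ)^(-(k:ℤ)-1) * b) := by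
      calc ∏ k ∈ Finset.range n, -((q:ℂ)^(-(k:ℤ)-1) * a)
          = ∏ k ∈ Finset.range n, (((q^d : ℝ) : ℂ) * -((q:ℂ)^(-(k:ℤ)-1) * b)) :=
            Finset.prod_congr rfl fun k _ => by rw [hab]; ring
        _ = _ := by rw [Finset.prod_mul_distrib, Finset.prod_const, Finset.card_range]
    have hAbne : (∏ k ∈ Finset.range n, -((q:ℂ)^(-(k:ℤ)-1) * b)) ≠ 0 :=
      Finset.prod_ne_zero_iff.mpr fun k _ =>
        neg_ne_zero.mpr (mul_ne_zero (zpow_ne_zero _ hq) hb0)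
    rw [hA]
    rw [show (((q^d : ℝ) : ℂ)^n * ∏ k ∈ Finset.range n, -((q:ℂ)^(-(k:ℤ)-1) * b)) *
        ((∏ k ∈ Finset.range n, (1 - (q:ℂ)^k * ((q:ℂ)/a))) * qPochInf q a)
        = (∏ k ∈ Finset.range n, -((q:ℂ)^(-(k:ℤ)-1) * b)) *
          (((q^d : ℝ) : ℂ)^n *
            ((∏ k ∈ Finset.range n, (1 - (q:ℂ)^k * ((q:ℂ)/a))) * qPochInf q a)) from by ring]
    rw [mul_div_mul_left _ _ hAbne, zpow_neg, zpow_natCast, mul_div_assoc,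
      ← mul_assoc, inv_mul_cancel₀ (pow_ne_zero n hρ), one_mul]
  have hma : Multipliable fun j : ℕ => 1 - (q:ℂ)^j * ((q:ℂ)/a) :=
    multipliable_qp hq0 hq1 _ (hfacinv hq0 a ha0 haq)
  have hmb : Multipliable fun j : ℕ => 1 - (q:ℂ)^j * ((q:ℂ)/b) :=
    multipliable_qp hq0 hq1 _ (hfacinv hq0 b hb0 hbq)
  have hta : Tendsto (fun n : ℕ => ∏ k ∈ Finset.range n, (1 - (q:ℂ)^k * ((q:ℂ)/a)))
      atTop (nhds (qPochInf q ((q:ℂ)/a))) := hma.hasProd.tendsto_prod_nat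
  have htb : Tendsto (fun n : ℕ => ∏ k ∈ Finset.range n, (1 - (q:ℂ)^k * ((q:ℂ)/b)))
      atTop (nhds (qPochInf q ((q:ℂ)/b))) := hmb.hasProd.tendsto_prod_nat
  have hQbne : qPochInf q b ≠ 0 :=
    qPochInf_ne_zero hq0 hq1 b fun j => by simpa using hfac hq0 b hbq 0 j
  have hQqbne : qPochInf q ((q:ℂ)/b) ≠ 0 :=
    qPochInf_ne_zero hq0 hq1 _ (hfacinv hq0 b hb0 hbq)
  have hlim : Tendsto (fun n : ℕ =>
      ((∏ k ∈ Finset.range n, (1 - (q:ℂ)^k * ((q:ℂ)/a))) * qPochInf q a) /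
      ((∏ k ∈ Finset.range n, (1 - (q:ℂ)^k * ((q:ℂ)/b))) * qPochInf q b)) atTop
      (nhds ((qPochInf q ((q:ℂ)/a) * qPochInf q a) /
        (qPochInf q ((q:ℂ)/b) * qPochInf q b))) :=
    (hta.mul_const _).div (htb.mul_const _) (mul_ne_zero hQqbne hQbne)
  rw [show (qPochInf q a * qPochInf q ((q:ℂ)/a)) / (qPochInf q b * qPochInf q ((q:ℂ)/b))
    = (qPochInf q ((q:ℂ)/a) * qPochInf q a) / (qPochInf q ((q:ℂ)/b) * qPochInf q b) from by
      ring]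
  exact hlim.congr fun n => (key n).symm



variable {q : ℝ}

lemma qpow_eq (hq0 : 0 < q) (r : ℝ) : qpow q r = ((q^r : ℝ) : ℂ) :=
  (Complex.ofReal_cpow hq0.le r).symm

lemma zpow_cast_q (hq0 : 0 < q) (n : ℤ) : (q:ℂ)^n = ((q^((n:ℤ):ℝ) : ℝ) : ℂ) := by
  rw [Real.rpow_intCast, Complex.ofReal_zpow]

lemma cpow_real_mul {r : ℝ} (hr : 0 < r) {w : ℂ} (hw : w ≠ 0) (c : ℂ) :
    ((r:ℂ) * w)^c = (r:ℂ)^c * w^c := by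
  have hrc : (r:ℂ) ≠ 0 := Complex.ofReal_ne_zero.mpr hr.ne'
  rw [Complex.cpow_def_of_ne_zero (mul_ne_zero hrc hw),
      Complex.cpow_def_of_ne_zero hrc, Complex.cpow_def_of_ne_zero hw,
      Complex.log_ofReal_mul hr hw, ← Complex.exp_add, ← Complex.ofReal_log hr.le]
  congr 1
  ring

lemma res1 (hq0 : 0 < q) (r : ℝ) {x ξ : ℂ} (hx : x ≠ 0) (hξ : ξ ≠ 0)
    (h : ∀ n : ℤ, x ≠ ((q^(r + (n:ℤ)) : ℝ):ℂ) * ξ) (n : ℤ) :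
    ((q^(1-r) : ℝ):ℂ) * x / ξ ≠ (q:ℂ)^n := by
  intro hcon
  apply h (n-1)
  have h1 : ((q^(1-r) : ℝ):ℂ) ≠ 0 :=
    Complex.ofReal_ne_zero.mpr (Real.rpow_pos_of_pos hq0 _).ne'
  have hx' : ((q^(1-r) : ℝ):ℂ) * x = (q:ℂ)^n * ξ := by
    field_simp at hcon
    linear_combination hcon
  rw [zpow_cast_q hq0 n] at hx'
  have hmul : (q : ℝ)^((n:ℤ):ℝ) = q^(1-r) * q^(r + ((n-1:ℤ):ℝ)) := by
    rw [← Real.rpow_add hq0]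
    congr 1
    push_cast
    ring
  rw [hmul] at hx'
  apply mul_left_cancel₀ h1
  push_cast at hx' ⊢
  linear_combination hx'

lemma res2 (hq0 : 0 < q) (r : ℝ) {x ξ : ℂ} (hx : x ≠ 0) (hξ : ξ ≠ 0)
    (h : ∀ n : ℤ, x ≠ ((q^(r + (n:ℤ)) : ℝ):ℂ) * ξ) (n : ℤ) :
    ((q^r : ℝ):ℂ) * ξ / x ≠ (q:ℂ)^n := by
  intro hcon
  apply h (-n)
  have hq : (q:ℂ) ≠ 0 := Complex.ofReal_ne_zero.mpr hq0.ne'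
  have hqn : (q:ℂ)^n ≠ 0 := zpow_ne_zero _ hq
  have hx' : ((q^r : ℝ):ℂ) * ξ = (q:ℂ)^n * x := by
    field_simp at hcon
    linear_combination hcon
  have hmul : (q : ℝ)^(r + ((-n:ℤ):ℝ)) * q^((n:ℤ):ℝ) = q^r := by
    rw [← Real.rpow_add hq0]
    congr 1
    push_cast
    ring
  rw [← hmul] at hx'
  rw [zpow_cast_q hq0 n] at hx'
  have hqn' : ((q^((n:ℤ):ℝ) : ℝ):ℂ) ≠ 0 :=
    Complex.ofReal_ne_zero.mpr (Real.rpow_pos_of_pos hq0 _).ne'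
  apply mul_left_cancel₀ hqn'
  push_cast at hx' ⊢
  rw [show r + -(n:ℝ) = r - (n:ℝ) from by ring] at hx'
  linear_combination -hx'


lemma rpow_zpow_cpow (hq0 : 0 < q) (dd : ℝ) (m : ℤ) :
    (((q^((m:ℤ):ℝ) : ℝ)):ℂ) ^ ((dd : ℝ):ℂ) = ((q^dd : ℝ):ℂ)^m := by
  rw [← Complex.ofReal_cpow (Real.rpow_pos_of_pos hq0 _).le,
      ← Real.rpow_mul hq0.le, mul_comm ((m:ℤ):ℝ) dd, Real.rpow_mul hq0.le,
      Real.rpow_intCast, Complex.ofReal_zpow]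

end auxQP


theorem stmt7 (q : ℝ) (hq0 : 0 < q) (hq1 : q < 1) (μ μ0 : ℝ)
    (x ξ : ℂ) (hx : x ≠ 0) (hξ : ξ ≠ 0)
    (hres0 : ∀ n : ℤ, x ≠ qpow q (μ0 + n) * ξ)
    (hres1 : ∀ n : ℤ, x ≠ qpow q (μ + n) * ξ) :
    Filter.Tendsto (fun L : ℤ => P2 q μ μ0 x ((q : ℂ) ^ L * ξ)) Filter.atTop
      (nhds ((x / ξ) ^ ((μ - μ0 : ℝ) : ℂ) *
        thetaQ q (qpow q (-μ0 + 1) * x / ξ) / thetaQ q (qpow q (-μ + 1) * x / ξ))) ∧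
    Filter.Tendsto
      (fun K : ℤ => ((q : ℂ) ^ (K - 1) * ξ) ^ ((μ - μ0 : ℝ) : ℂ) *
        P1 q μ μ0 x ((q : ℂ) ^ (K - 1) * ξ)) Filter.atBot
      (nhds (ξ ^ ((μ - μ0 : ℝ) : ℂ) *
        thetaQ q (qpow q (-μ + 1) * x / ξ) / thetaQ q (qpow q (-μ0 + 1) * x / ξ))) := by
  have hq : (q:ℂ) ≠ 0 := Complex.ofReal_ne_zero.mpr hq0.ne'
  have hxξ : x / ξ ≠ 0 := div_ne_zero hx hξ
  have hres0' : ∀ n : ℤ, x ≠ ((q^(μ0 + (n:ℤ)) : ℝ):ℂ) * ξ := fun n => by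
    simpa only [qpow_eq hq0] using hres0 n
  have hres1' : ∀ n : ℤ, x ≠ ((q^(μ + (n:ℤ)) : ℝ):ℂ) * ξ := fun n => by
    simpa only [qpow_eq hq0] using hres1 n
  have hQq : qPochInf q (q:ℂ) ≠ 0 := by
    apply qPochInf_ne_zero hq0 hq1
    intro j
    rw [sub_ne_zero]
    intro hcon
    have h1 : ((q ^ (j+1) : ℝ) : ℂ) = 1 := by push_cast; rw [pow_succ]; exact hcon.symm
    have h2 : (q:ℝ)^(j+1) = 1 := by exact_mod_cast h1
    have h3 : (q:ℝ)^(j+1) < 1 := pow_lt_one₀ hq0.le hq1 (Nat.succ_ne_zero j)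
    linarith
  constructor
  · -- part (a)
    have hA0 : ((q^(1-μ0) : ℝ):ℂ) * x / ξ ≠ 0 := div_ne_zero (mul_ne_zero
      (Complex.ofReal_ne_zero.mpr (Real.rpow_pos_of_pos hq0 _).ne') hx) hξ
    have hB0 : ((q^(1-μ) : ℝ):ℂ) * x / ξ ≠ 0 := div_ne_zero (mul_ne_zero
      (Complex.ofReal_ne_zero.mpr (Real.rpow_pos_of_pos hq0 _).ne') hx) hξ
    have hAq : ∀ n : ℤ, ((q^(1-μ0) : ℝ):ℂ) * x / ξ ≠ (q:ℂ)^n := res1 hq0 μ0 hx hξ hres0'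
    have hBq : ∀ n : ℤ, ((q^(1-μ) : ℝ):ℂ) * x / ξ ≠ (q:ℂ)^n := res1 hq0 μ hx hξ hres1'
    have hab : ((q^(1-μ0) : ℝ):ℂ) * x / ξ
        = ((q^(μ-μ0) : ℝ):ℂ) * (((q^(1-μ) : ℝ):ℂ) * x / ξ) := by
      rw [show ((q^(μ-μ0) : ℝ):ℂ) * (((q^(1-μ) : ℝ):ℂ) * x / ξ)
          = ((q^(μ-μ0) * q^(1-μ) : ℝ):ℂ) * x / ξ from by push_cast; ring,
        ← Real.rpow_add hq0, show μ-μ0+(1-μ) = 1-μ0 from by ring]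
    have hmain := main_tendsto hq0 hq1 _ _ hA0 hB0 hAq hBq (μ-μ0) hab
    have hg := hmain.const_mul ((x/ξ) ^ ((μ - μ0 : ℝ):ℂ))
    have hQB : qPochInf q (((q^(1-μ) : ℝ):ℂ) * x / ξ) ≠ 0 :=
      qPochInf_ne_zero hq0 hq1 _ (fun j => by simpa using hfac hq0 _ hBq 0 j)
    have hQqB : qPochInf q ((q:ℂ)/(((q^(1-μ) : ℝ):ℂ) * x / ξ)) ≠ 0 :=
      qPochInf_ne_zero hq0 hq1 _ (hfacinv hq0 _ hB0 hBq)
    have hval : (x / ξ) ^ ((μ - μ0 : ℝ):ℂ) * thetaQ q (qpow q (-μ0 + 1) * x / ξ)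
          / thetaQ q (qpow q (-μ + 1) * x / ξ)
        = (x/ξ) ^ ((μ - μ0 : ℝ):ℂ) *
          ((qPochInf q (((q^(1-μ0) : ℝ):ℂ) * x / ξ) *
            qPochInf q ((q:ℂ)/(((q^(1-μ0) : ℝ):ℂ) * x / ξ))) /
           (qPochInf q (((q^(1-μ) : ℝ):ℂ) * x / ξ) *
            qPochInf q ((q:ℂ)/(((q^(1-μ) : ℝ):ℂ) * x / ξ)))) := by
      rw [qpow_eq hq0, qpow_eq hq0, show -μ0+1 = 1-μ0 from by ring,
        show -μ+1 = 1-μ from by ring, thetaQ, thetaQ, mul_div_assoc]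
      congr 1
      exact mul_div_mul_right _ _ hQq
    rw [hval]
    have key : ∀ n : ℕ, P2 q μ μ0 x ((q:ℂ)^((n:ℕ):ℤ) * ξ)
        = (x/ξ) ^ ((μ - μ0 : ℝ):ℂ) * (((q^(μ-μ0) : ℝ):ℂ)^(-(n:ℤ)) *
          (qPochInf q ((q:ℂ)^(-(n:ℤ)) * (((q^(1-μ0) : ℝ):ℂ) * x / ξ)) /
           qPochInf q ((q:ℂ)^(-(n:ℤ)) * (((q^(1-μ) : ℝ):ℂ) * x / ξ)))) := by
      intro n
      rw [P2, qpow_eq hq0, qpow_eq hq0, show -μ0+1 = 1-μ0 from by ring,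
        show -μ+1 = 1-μ from by ring]
      have harg : ∀ u : ℂ, u * x / ((q:ℂ)^((n:ℕ):ℤ) * ξ)
          = (q:ℂ)^(-(n:ℤ)) * (u * x / ξ) := by
        intro u
        rw [zpow_neg]
        field_simp
      rw [harg, harg]
      have hpre : x / ((q:ℂ)^((n:ℕ):ℤ) * ξ)
          = ((q^(((-(n:ℤ)) : ℤ):ℝ) : ℝ):ℂ) * (x/ξ) := by
        rw [← zpow_cast_q hq0 (-(n:ℤ)), zpow_neg]
        field_simp
      rw [hpre, cpow_real_mul (Real.rpow_pos_of_pos hq0 _) hxξ,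
        rpow_zpow_cpow hq0 (μ-μ0) (-(n:ℤ))]
      ring
    have htoNat : Tendsto (fun L : ℤ => L.toNat) atTop atTop := by
      apply tendsto_atTop_atTop.mpr
      intro b
      exact ⟨(b:ℤ), fun a ha => by omega⟩
    refine (hg.comp htoNat).congr' ?_
    filter_upwards [eventually_ge_atTop (0:ℤ)] with L hL
    have hn : ((L.toNat : ℕ):ℤ) = L := Int.toNat_of_nonneg hL
    simp only [Function.comp]
    rw [← key L.toNat, hn]
  · -- part (b)
    have hA0 : ((q^μ : ℝ):ℂ) * ξ / x ≠ 0 := div_ne_zero (mul_ne_zero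
      (Complex.ofReal_ne_zero.mpr (Real.rpow_pos_of_pos hq0 _).ne') hξ) hx
    have hB0 : ((q^μ0 : ℝ):ℂ) * ξ / x ≠ 0 := div_ne_zero (mul_ne_zero
      (Complex.ofReal_ne_zero.mpr (Real.rpow_pos_of_pos hq0 _).ne') hξ) hx
    have hAq : ∀ n : ℤ, ((q^μ : ℝ):ℂ) * ξ / x ≠ (q:ℂ)^n := res2 hq0 μ hx hξ hres1'
    have hBq : ∀ n : ℤ, ((q^μ0 : ℝ):ℂ) * ξ / x ≠ (q:ℂ)^n := res2 hq0 μ0 hx hξ hres0'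
    have hab : ((q^μ : ℝ):ℂ) * ξ / x
        = ((q^(μ-μ0) : ℝ):ℂ) * (((q^μ0 : ℝ):ℂ) * ξ / x) := by
      rw [show ((q^(μ-μ0) : ℝ):ℂ) * (((q^μ0 : ℝ):ℂ) * ξ / x)
          = ((q^(μ-μ0) * q^μ0 : ℝ):ℂ) * ξ / x from by push_cast; ring,
        ← Real.rpow_add hq0, show μ-μ0+μ0 = μ from by ring]
    have hmain := main_tendsto hq0 hq1 _ _ hA0 hB0 hAq hBq (μ-μ0) hab
    have hg := hmain.const_mul (ξ ^ ((μ - μ0 : ℝ):ℂ))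
    have hQB : qPochInf q (((q^μ0 : ℝ):ℂ) * ξ / x) ≠ 0 :=
      qPochInf_ne_zero hq0 hq1 _ (fun j => by simpa using hfac hq0 _ hBq 0 j)
    have hQqB : qPochInf q ((q:ℂ)/(((q^μ0 : ℝ):ℂ) * ξ / x)) ≠ 0 :=
      qPochInf_ne_zero hq0 hq1 _ (hfacinv hq0 _ hB0 hBq)
    have hT1 : qpow q (-μ + 1) * x / ξ = (q:ℂ)/(((q^μ : ℝ):ℂ) * ξ / x) := by
      rw [qpow_eq hq0, div_div_eq_mul_div]
      have hC : ((q^(-μ+1) : ℝ):ℂ) * ((q^μ : ℝ):ℂ) = (q:ℂ) := by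
        rw [← Complex.ofReal_mul, ← Real.rpow_add hq0, show -μ+1+μ = 1 from by ring,
          Real.rpow_one]
      have hne : ((q^μ : ℝ):ℂ) ≠ 0 :=
        Complex.ofReal_ne_zero.mpr (Real.rpow_pos_of_pos hq0 _).ne'
      rw [div_eq_div_iff hξ (mul_ne_zero hne hξ)]
      linear_combination x * ξ * hC
    have hT0 : qpow q (-μ0 + 1) * x / ξ = (q:ℂ)/(((q^μ0 : ℝ):ℂ) * ξ / x) := by
      rw [qpow_eq hq0, div_div_eq_mul_div]
      have hC : ((q^(-μ0+1) : ℝ):ℂ) * ((q^μ0 : ℝ):ℂ) = (q:ℂ) := by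
        rw [← Complex.ofReal_mul, ← Real.rpow_add hq0, show -μ0+1+μ0 = 1 from by ring,
          Real.rpow_one]
      have hne : ((q^μ0 : ℝ):ℂ) ≠ 0 :=
        Complex.ofReal_ne_zero.mpr (Real.rpow_pos_of_pos hq0 _).ne'
      rw [div_eq_div_iff hξ (mul_ne_zero hne hξ)]
      linear_combination x * ξ * hC
    have hqT1 : (q:ℂ)/((q:ℂ)/(((q^μ : ℝ):ℂ) * ξ / x)) = ((q^μ : ℝ):ℂ) * ξ / x := by
      rw [div_div_eq_mul_div, mul_div_cancel_left₀ _ hq]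
    have hqT0 : (q:ℂ)/((q:ℂ)/(((q^μ0 : ℝ):ℂ) * ξ / x)) = ((q^μ0 : ℝ):ℂ) * ξ / x := by
      rw [div_div_eq_mul_div, mul_div_cancel_left₀ _ hq]
    have hval : ξ ^ ((μ - μ0 : ℝ):ℂ) * thetaQ q (qpow q (-μ + 1) * x / ξ)
          / thetaQ q (qpow q (-μ0 + 1) * x / ξ)
        = ξ ^ ((μ - μ0 : ℝ):ℂ) *
          ((qPochInf q (((q^μ : ℝ):ℂ) * ξ / x) *
            qPochInf q ((q:ℂ)/(((q^μ : ℝ):ℂ) * ξ / x))) /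
           (qPochInf q (((q^μ0 : ℝ):ℂ) * ξ / x) *
            qPochInf q ((q:ℂ)/(((q^μ0 : ℝ):ℂ) * ξ / x)))) := by
      rw [hT1, hT0, thetaQ, thetaQ, hqT1, hqT0, mul_div_assoc]
      congr 1
      rw [mul_div_mul_right _ _ hQq]
      ring
    rw [hval]
    have key : ∀ n : ℕ, ((q:ℂ)^(-(n:ℤ)) * ξ) ^ ((μ - μ0 : ℝ):ℂ) *
          P1 q μ μ0 x ((q:ℂ)^(-(n:ℤ)) * ξ)
        = ξ ^ ((μ - μ0 : ℝ):ℂ) * (((q^(μ-μ0) : ℝ):ℂ)^(-(n:ℤ)) *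
          (qPochInf q ((q:ℂ)^(-(n:ℤ)) * (((q^μ : ℝ):ℂ) * ξ / x)) /
           qPochInf q ((q:ℂ)^(-(n:ℤ)) * (((q^μ0 : ℝ):ℂ) * ξ / x)))) := by
      intro n
      rw [P1, qpow_eq hq0 μ, qpow_eq hq0 μ0]
      have harg : ∀ u : ℂ, u * ((q:ℂ)^(-(n:ℤ)) * ξ) / x
          = (q:ℂ)^(-(n:ℤ)) * (u * ξ / x) := fun u => by ring
      rw [harg, harg]
      have hpre : (q:ℂ)^(-(n:ℤ)) * ξ = ((q^(((-(n:ℤ)) : ℤ):ℝ) : ℝ):ℂ) * ξ := by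
        rw [← zpow_cast_q hq0]
      rw [hpre, cpow_real_mul (Real.rpow_pos_of_pos hq0 _) hξ,
        rpow_zpow_cpow hq0 (μ-μ0) (-(n:ℤ))]
      ring
    have htoNat : Tendsto (fun K : ℤ => (1-K).toNat) atBot atTop := by
      apply tendsto_atBot_atTop.mpr
      intro b
      exact ⟨-(b:ℤ), fun a ha => by omega⟩
    refine (hg.comp htoNat).congr' ?_
    filter_upwards [eventually_le_atBot (0:ℤ)] with K hK
    have hn : -((((1-K).toNat : ℕ)):ℤ) = K - 1 := by omega
    simp only [Function.comp]
    rw [← key ((1-K).toNat), hn]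
end

section
/- Let 0<q<1 be real (q ≠ 1 suffices with q ≠ 0), let a,b,c,ã,b̃,c̃ be complex-valued functions, Φ a function of two complex variables, h a function of one complex variable, ξ a nonzero complex number, x a nonzero complex number, and K ≤ L integers. Assume (1) a(x)Φ(x/q,s)+b(x)Φ(x,s)+c(x)Φ(qx,s) = ã(s)Φ(x,s/q)+b̃(s)Φ(x,s)+c̃(s)Φ(x,qs) holds for s = q^{n}ξ for every integer n with K ≤ n ≤ L, and (2) q·ã(qs)h(qs) + b̃(s)h(s) + q^{−1}·c̃(s/q)h(s/q) = 0 holds for s = q^{n}ξ for every integer n with K ≤ n ≤ L. Define g^{[K,L]}(y) = (1−q)·Σ_{n=K}^{L} q^{n}ξ·h(q^{n}ξ)·Φ(y,q^{n}ξ). Then a(x)g^{[K,L]}(x/q) + b(x)g^{[K,L]}(x) + c(x)g^{[K,L]}(qx) = −(1−q)·[q·s·ã(qs)h(qs)Φ(x,s) − s·c̃(s)h(s)Φ(x,qs)] evaluated at s = q^{L}ξ, plus (1−q)·[q·s·ã(qs)h(qs)Φ(x,s) − s·c̃(s)h(s)Φ(x,qs)] evaluated at s = q^{K−1}ξ. 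-/
/-!
The three-term operator in `x` and the one in `s` are intertwined by `Φ` on the lattice
`q^n ξ`, and `h` solves the adjoint of the `s`-operator with respect to the Jackson measure
`s d_q s`. Summation by parts on the lattice (a discrete Lagrange identity) then turns each
summand of `a g(x/q) + b g(x) + c g(qx)` into a difference of consecutive boundary terms,
so the sum telescopes to the two end contributions.
-/

open Finset

theorem Finset.sum_Icc_int_sub_sub {M : Type*} [AddCommGroup M] (f : ℤ → M) {K L : ℤ}
    (hKL : K - 1 ≤ L) : ∑ n ∈ Icc K L, (f (n - 1) - f n) = f (K - 1) - f L := by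
  induction L, hKL using Int.leInduction with
  | base => simp
  | succ L hL ih =>
    rw [← insert_Icc_right_eq_Icc_add_one (by omega), sum_insert (by simp), ih,
      add_sub_cancel_right]
    abel

section qLagrange

variable {F : Type*} [Field F] (q : F) (ta tb tc h φ : F → F)

/-- The boundary term of summation by parts of `ta T⁻¹ + tb + tc T` against `h` for the
measure `s d_q s`. -/
def qBoundaryTerm (s : F) : F :=
  q * s * ta (q * s) * h (q * s) * φ s - s * tc s * h s * φ (q * s)

variable {q ta tb tc h φ}

theorem mul_eq_qBoundaryTerm_div_sub (hq : q ≠ 0) {s A : F}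
    (hA : A = ta s * φ (s / q) + tb s * φ s + tc s * φ (q * s))
    (hh : q * ta (q * s) * h (q * s) + tb s * h s + q⁻¹ * tc (s / q) * h (s / q) = 0) :
    s * h s * A = qBoundaryTerm q ta tc h φ (s / q) - qBoundaryTerm q ta tc h φ s := by
  have hqs : q * (s / q) = s := mul_div_cancel₀ s hq
  simp only [qBoundaryTerm, hqs]
  linear_combination (s * h s) * hA + (s * φ s) * hh

end qLagrange

theorem stmt8_general (q : ℝ) (hq0 : 0 < q)
    (a b c ta tb tc : ℂ → ℂ) (Φ : ℂ → ℂ → ℂ) (h : ℂ → ℂ)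
    (ξ x : ℂ) (K L : ℤ) (hKL : K ≤ L)
    (hker : ∀ n : ℤ, K ≤ n → n ≤ L → ∀ s : ℂ, s = (q : ℂ) ^ n * ξ →
      a x * Φ (x / (q : ℂ)) s + b x * Φ x s + c x * Φ ((q : ℂ) * x) s
        = ta s * Φ x (s / (q : ℂ)) + tb s * Φ x s + tc s * Φ x ((q : ℂ) * s))
    (hh : ∀ n : ℤ, K ≤ n → n ≤ L → ∀ s : ℂ, s = (q : ℂ) ^ n * ξ →
      (q : ℂ) * ta ((q : ℂ) * s) * h ((q : ℂ) * s) + tb s * h s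
        + (q : ℂ)⁻¹ * tc (s / (q : ℂ)) * h (s / (q : ℂ)) = 0)
    (g : ℂ → ℂ)
    (hg : ∀ y : ℂ, g y = (1 - (q : ℂ)) *
      ∑ n ∈ Finset.Icc K L, (q : ℂ) ^ n * ξ * h ((q : ℂ) ^ n * ξ) * Φ y ((q : ℂ) ^ n * ξ)) :
    a x * g (x / (q : ℂ)) + b x * g x + c x * g ((q : ℂ) * x)
      = -((1 - (q : ℂ)) *
          ((q : ℂ) * ((q : ℂ) ^ L * ξ) * ta ((q : ℂ) * ((q : ℂ) ^ L * ξ)) *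
              h ((q : ℂ) * ((q : ℂ) ^ L * ξ)) * Φ x ((q : ℂ) ^ L * ξ)
            - ((q : ℂ) ^ L * ξ) * tc ((q : ℂ) ^ L * ξ) * h ((q : ℂ) ^ L * ξ) *
              Φ x ((q : ℂ) * ((q : ℂ) ^ L * ξ))))
        + (1 - (q : ℂ)) *
          ((q : ℂ) * ((q : ℂ) ^ (K - 1) * ξ) * ta ((q : ℂ) * ((q : ℂ) ^ (K - 1) * ξ)) *
              h ((q : ℂ) * ((q : ℂ) ^ (K - 1) * ξ)) * Φ x ((q : ℂ) ^ (K - 1) * ξ)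
            - ((q : ℂ) ^ (K - 1) * ξ) * tc ((q : ℂ) ^ (K - 1) * ξ) * h ((q : ℂ) ^ (K - 1) * ξ) *
              Φ x ((q : ℂ) * ((q : ℂ) ^ (K - 1) * ξ))) := by
  have hq : (q : ℂ) ≠ 0 := by exact_mod_cast hq0.ne'
  set B : ℤ → ℂ := fun n ↦ qBoundaryTerm (q : ℂ) ta tc h (Φ x) ((q : ℂ) ^ n * ξ)
  have hterm : ∀ n ∈ Icc K L, (q : ℂ) ^ n * ξ * h ((q : ℂ) ^ n * ξ) *
      (a x * Φ (x / q) ((q : ℂ) ^ n * ξ) + b x * Φ x ((q : ℂ) ^ n * ξ)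
        + c x * Φ (q * x) ((q : ℂ) ^ n * ξ)) = B (n - 1) - B n := by
    intro n hn
    obtain ⟨hKn, hnL⟩ := mem_Icc.mp hn
    have hprev : (q : ℂ) ^ (n - 1) * ξ = (q : ℂ) ^ n * ξ / q := by
      rw [zpow_sub_one₀ hq]; ring
    simp only [B, hprev]
    exact mul_eq_qBoundaryTerm_div_sub hq (hker n hKn hnL _ rfl) (hh n hKn hnL _ rfl)
  calc a x * g (x / q) + b x * g x + c x * g (q * x)
      = (1 - q) * ∑ n ∈ Icc K L, (q : ℂ) ^ n * ξ * h ((q : ℂ) ^ n * ξ) *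
          (a x * Φ (x / q) ((q : ℂ) ^ n * ξ) + b x * Φ x ((q : ℂ) ^ n * ξ)
            + c x * Φ (q * x) ((q : ℂ) ^ n * ξ)) := by
        simp only [hg, mul_sum, ← sum_add_distrib]
        exact sum_congr rfl fun n _ ↦ by ring
    _ = (1 - q) * (B (K - 1) - B L) := by
        rw [sum_congr rfl hterm, sum_Icc_int_sub_sub B (by omega)]
    _ = _ := by simp only [B, qBoundaryTerm]; ring

theorem stmt8 (q : ℝ) (hq0 : 0 < q) (hq1 : q < 1)
    (a b c ta tb tc : ℂ → ℂ) (Φ : ℂ → ℂ → ℂ) (h : ℂ → ℂ)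
    (ξ x : ℂ) (hξ : ξ ≠ 0) (hx : x ≠ 0) (K L : ℤ) (hKL : K ≤ L)
    (hker : ∀ n : ℤ, K ≤ n → n ≤ L → ∀ s : ℂ, s = (q : ℂ) ^ n * ξ →
      a x * Φ (x / (q : ℂ)) s + b x * Φ x s + c x * Φ ((q : ℂ) * x) s
        = ta s * Φ x (s / (q : ℂ)) + tb s * Φ x s + tc s * Φ x ((q : ℂ) * s))
    (hh : ∀ n : ℤ, K ≤ n → n ≤ L → ∀ s : ℂ, s = (q : ℂ) ^ n * ξ →
      (q : ℂ) * ta ((q : ℂ) * s) * h ((q : ℂ) * s) + tb s * h s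
        + (q : ℂ)⁻¹ * tc (s / (q : ℂ)) * h (s / (q : ℂ)) = 0)
    (g : ℂ → ℂ)
    (hg : ∀ y : ℂ, g y = (1 - (q : ℂ)) *
      ∑ n ∈ Finset.Icc K L, (q : ℂ) ^ n * ξ * h ((q : ℂ) ^ n * ξ) * Φ y ((q : ℂ) ^ n * ξ)) :
    a x * g (x / (q : ℂ)) + b x * g x + c x * g ((q : ℂ) * x)
      = -((1 - (q : ℂ)) *
          ((q : ℂ) * ((q : ℂ) ^ L * ξ) * ta ((q : ℂ) * ((q : ℂ) ^ L * ξ)) *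
              h ((q : ℂ) * ((q : ℂ) ^ L * ξ)) * Φ x ((q : ℂ) ^ L * ξ)
            - ((q : ℂ) ^ L * ξ) * tc ((q : ℂ) ^ L * ξ) * h ((q : ℂ) ^ L * ξ) *
              Φ x ((q : ℂ) * ((q : ℂ) ^ L * ξ))))
        + (1 - (q : ℂ)) *
          ((q : ℂ) * ((q : ℂ) ^ (K - 1) * ξ) * ta ((q : ℂ) * ((q : ℂ) ^ (K - 1) * ξ)) *
              h ((q : ℂ) * ((q : ℂ) ^ (K - 1) * ξ)) * Φ x ((q : ℂ) ^ (K - 1) * ξ)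
            - ((q : ℂ) ^ (K - 1) * ξ) * tc ((q : ℂ) ^ (K - 1) * ξ) * h ((q : ℂ) ^ (K - 1) * ξ) *
              Φ x ((q : ℂ) * ((q : ℂ) ^ (K - 1) * ξ))) :=
  stmt8_general q hq0 a b c ta tb tc Φ h ξ x K L hKL hker hh g hg
end

section
/- Let 0<q<1 be real, let a,b,c,ã,b̃,c̃ be complex-valued functions, Φ a function of two complex variables, h a function of one complex variable, A a nonzero complex number, x a nonzero complex number, and K ≤ L integers. Assume (1) a(x)Φ(x/q,s)+b(x)Φ(x,s)+c(x)Φ(qx,s) = ã(s)Φ(x,s/q)+b̃(s)Φ(x,s)+c̃(s)Φ(x,qs) holds for s = q^{n}Ax for every integer n with K ≤ n ≤ L, and (2) q·ã(qs)h(qs) + b̃(s)h(s) + q^{−1}·c̃(s/q)h(s/q) = 0 holds for s = q^{n}Ax for every integer n with K ≤ n ≤ L. Define g^{[K,L]}(y) = (1−q)·Σ_{n=K}^{L} q^{n}Ay·h(q^{n}Ay)·Φ(y,q^{n}Ay). Then a(x)g^{[K,L]}(x/q) + b(x)g^{[K,L]}(x) + c(x)g^{[K,L]}(qx) equals: −(1−q)[s·a(x)h(s)Φ(x/q,s)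 − q·s·c(x)h(qs)Φ(qx,qs)] at s = q^{L}Ax, plus (1−q)[s·a(x)h(s)Φ(x/q,s) − q·s·c(x)h(qs)Φ(qx,qs)] at s = q^{K−1}Ax, minus (1−q)[q·s·ã(qs)h(qs)Φ(x,s) − s·c̃(s)h(s)Φ(x,qs)] at s = q^{L}Ax, plus (1−q)[q·s·ã(qs)h(qs)Φ(x,s) − s·c̃(s)h(s)Φ(x,qs)] at s = q^{K−1}Ax. -/
open Filter Topology

private lemma tel_aux (D : ℤ → ℂ) (K L : ℤ) (hKL : K ≤ L) :
    ∑ n ∈ Finset.Icc K L, (D (n - 1) - D n) = D (K - 1) - D L := by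
  refine Int.le_induction
      (motive := fun L _ => ∑ n ∈ Finset.Icc K L, (D (n - 1) - D n) = D (K - 1) - D L) ?_ ?_ L hKL
  · simp
  · intro L hL ih
    have hins : Finset.Icc K (L + 1) = insert (L + 1) (Finset.Icc K L) := by
      ext m; simp only [Finset.mem_Icc, Finset.mem_insert]; omega
    rw [hins, Finset.sum_insert (by simp only [Finset.mem_Icc]; omega), ih]
    ring

theorem stmt9 (q : ℝ) (hq0 : 0 < q) (hq1 : q < 1)
    (a b c ta tb tc : ℂ → ℂ) (Φ : ℂ → ℂ → ℂ) (h : ℂ → ℂ)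
    (A x : ℂ) (hA : A ≠ 0) (hx : x ≠ 0) (K L : ℤ) (hKL : K ≤ L)
    (hker : ∀ n : ℤ, K ≤ n → n ≤ L → ∀ s : ℂ, s = (q : ℂ) ^ n * A * x →
      a x * Φ (x / (q : ℂ)) s + b x * Φ x s + c x * Φ ((q : ℂ) * x) s
        = ta s * Φ x (s / (q : ℂ)) + tb s * Φ x s + tc s * Φ x ((q : ℂ) * s))
    (hh : ∀ n : ℤ, K ≤ n → n ≤ L → ∀ s : ℂ, s = (q : ℂ) ^ n * A * x →
      (q : ℂ) * ta ((q : ℂ) * s) * h ((q : ℂ) * s) + tb s * h s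
        + (q : ℂ)⁻¹ * tc (s / (q : ℂ)) * h (s / (q : ℂ)) = 0)
    (g : ℂ → ℂ)
    (hg : ∀ y : ℂ, g y = (1 - (q : ℂ)) *
      ∑ n ∈ Finset.Icc K L,
        (q : ℂ) ^ n * A * y * h ((q : ℂ) ^ n * A * y) * Φ y ((q : ℂ) ^ n * A * y)) :
    a x * g (x / (q : ℂ)) + b x * g x + c x * g ((q : ℂ) * x)
      = -((1 - (q : ℂ)) *
          (((q : ℂ) ^ L * A * x) * a x * h ((q : ℂ) ^ L * A * x) *
              Φ (x / (q : ℂ)) ((q : ℂ) ^ L * A * x)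
            - (q : ℂ) * ((q : ℂ) ^ L * A * x) * c x * h ((q : ℂ) * ((q : ℂ) ^ L * A * x)) *
              Φ ((q : ℂ) * x) ((q : ℂ) * ((q : ℂ) ^ L * A * x))))
        + (1 - (q : ℂ)) *
          (((q : ℂ) ^ (K - 1) * A * x) * a x * h ((q : ℂ) ^ (K - 1) * A * x) *
              Φ (x / (q : ℂ)) ((q : ℂ) ^ (K - 1) * A * x)
            - (q : ℂ) * ((q : ℂ) ^ (K - 1) * A * x) * c x *
              h ((q : ℂ) * ((q : ℂ) ^ (K - 1) * A * x)) *
              Φ ((q : ℂ) * x) ((q : ℂ) * ((q : ℂ) ^ (K - 1) * A * x)))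
        - (1 - (q : ℂ)) *
          ((q : ℂ) * ((q : ℂ) ^ L * A * x) * ta ((q : ℂ) * ((q : ℂ) ^ L * A * x)) *
              h ((q : ℂ) * ((q : ℂ) ^ L * A * x)) * Φ x ((q : ℂ) ^ L * A * x)
            - ((q : ℂ) ^ L * A * x) * tc ((q : ℂ) ^ L * A * x) * h ((q : ℂ) ^ L * A * x) *
              Φ x ((q : ℂ) * ((q : ℂ) ^ L * A * x)))
        + (1 - (q : ℂ)) *
          ((q : ℂ) * ((q : ℂ) ^ (K - 1) * A * x) * ta ((q : ℂ) * ((q : ℂ) ^ (K - 1) * A * x)) *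
              h ((q : ℂ) * ((q : ℂ) ^ (K - 1) * A * x)) * Φ x ((q : ℂ) ^ (K - 1) * A * x)
            - ((q : ℂ) ^ (K - 1) * A * x) * tc ((q : ℂ) ^ (K - 1) * A * x) *
              h ((q : ℂ) ^ (K - 1) * A * x) *
              Φ x ((q : ℂ) * ((q : ℂ) ^ (K - 1) * A * x))) := by
  have hq : (q : ℂ) ≠ 0 := by
    exact_mod_cast hq0.ne'
  set s : ℤ → ℂ := fun n => (q : ℂ) ^ n * A * x with hsdef
  have hs1 : ∀ n : ℤ, (q : ℂ) * s n = s (n + 1) := by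
    intro n; simp only [hsdef]; rw [zpow_add_one₀ hq]; ring
  have hs2 : ∀ n : ℤ, s n / (q : ℂ) = s (n - 1) := by
    intro n; simp only [hsdef]; rw [zpow_sub_one₀ hq]; field_simp
  set F : ℤ → ℂ := fun m => s (m + 1) * ta (s (m + 1)) * h (s (m + 1)) * Φ x (s m) with hF
  set G : ℤ → ℂ := fun m => s m * tc (s m) * h (s m) * Φ x (s (m + 1)) with hG
  set P : ℤ → ℂ := fun m => a x * (s m * h (s m) * Φ (x / (q : ℂ)) (s m)) with hP
  set C : ℤ → ℂ := fun m => c x * (s m * h (s m) * Φ ((q : ℂ) * x) (s m)) with hC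
  set D : ℤ → ℂ := fun m => P m + F m - C (m + 1) - G m with hD
  have e0 : ∀ n : ℤ, (q : ℂ) ^ n * A * x = s n := fun n => rfl
  have e1 : ∀ n : ℤ, (q : ℂ) ^ n * A * (x / (q : ℂ)) = s (n - 1) := by
    intro n; rw [← hs2 n]; simp only [hsdef]; field_simp
  have e2 : ∀ n : ℤ, (q : ℂ) ^ n * A * ((q : ℂ) * x) = s (n + 1) := by
    intro n; rw [← hs1 n]; simp only [hsdef]; ring
  have key : ∀ n : ℤ, K ≤ n → n ≤ L →
      P n + b x * (s n * h (s n) * Φ x (s n)) + C n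
        = F (n - 1) + G n - F n - G (n - 1) := by
    intro n h1 h2
    have hk := hker n h1 h2 (s n) rfl
    have hhn := hh n h1 h2 (s n) rfl
    rw [hs1 n, hs2 n] at hk hhn
    simp only [hP, hC, hF, hG]
    rw [show n - 1 + 1 = n from by ring]
    have hiq : (q : ℂ)⁻¹ * s n = s (n - 1) := by
      rw [← hs2 n]; field_simp
    linear_combination (s n * h (s n)) * hk + (s n * Φ x (s n)) * hhn
      - (ta (s (n + 1)) * h (s (n + 1)) * Φ x (s n)) * hs1 n
      - (tc (s (n - 1)) * h (s (n - 1)) * Φ x (s n)) * hiq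
  have expand : a x * g (x / (q : ℂ)) + b x * g x + c x * g ((q : ℂ) * x)
      = (1 - (q : ℂ)) * ∑ n ∈ Finset.Icc K L, (D (n - 1) - D n) := by
    rw [hg, hg, hg]
    simp only [Finset.mul_sum]
    rw [← Finset.sum_add_distrib, ← Finset.sum_add_distrib]
    refine Finset.sum_congr rfl fun n hn => ?_
    rw [Finset.mem_Icc] at hn
    simp only [e0, e1, e2]
    have hkey := key n hn.1 hn.2
    simp only [hD, hP, hC] at hkey ⊢
    rw [show n - 1 + 1 = n from by ring]
    linear_combination (1 - (q : ℂ)) * hkey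
  rw [expand, tel_aux D K L hKL]
  have r1 : (q : ℂ) * ((q : ℂ) ^ L * A * x) = s (L + 1) := by
    rw [← hs1 L]
  have r2 : (q : ℂ) * ((q : ℂ) ^ (K - 1) * A * x) = s K := by
    conv_rhs => rw [show K = K - 1 + 1 from by ring]
    rw [← hs1 (K - 1)]
  rw [r1, r2, e0 L, e0 (K - 1)]
  simp only [hD, hP, hC, hF, hG]
  rw [show K - 1 + 1 = K from by ring]
  ring
end

section
/- Let 0<q<1 be real, let a,b,c,ã,b̃,c̃ be complex-valued functions, Φ a function of two complex variables, h a function of one complex variable, ξ a nonzero complex number, and x a nonzero complex number. Assume: (1) a(x)Φ(x/q,s)+b(x)Φ(x,s)+c(x)Φ(qx,s) = ã(s)Φ(x,s/q)+b̃(s)Φ(x,s)+c̃(s)Φ(x,qs) for s = q^{n}ξ for every integer n; (2) q·ã(qs)h(qs) + b̃(s)h(s) + q^{−1}·c̃(s/q)h(s/q) = 0 for s = q^{n}ξ for every integer n; (3) for each y ∈ {x, qx, x/q} the bilateral series g(y) = (1−q)·Σ_{n∈ℤ} q^{n}ξ·h(q^{n}ξ)·Φ(y,q^{n}ξ) converges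 (both one-sided series converge); (4) the limits g1(x) = lim_{L→+∞}[q·s·ã(qs)h(qs)Φ(x,s) − s·c̃(s)h(s)Φ(x,qs)] at s=q^{L}ξ and g2(x) = lim_{K→−∞}[q·s·ã(qs)h(qs)Φ(x,s) − s·c̃(s)h(s)Φ(x,qs)] at s=q^{K−1}ξ exist. Then a(x)g(x/q) + b(x)g(x) + c(x)g(qx) = (1−q)·(g2(x) − g1(x)). -/
open Filter Topology

/-- The bilateral series `Σ_{n∈ℤ} f n` converges to `S`: the series over `n ≥ 0` and the
series over `n < 0` both converge, with sum `S`. -/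
def HasBilatSum (f : ℤ → ℂ) (S : ℂ) : Prop :=
  ∃ Sp Sm : ℂ,
    Filter.Tendsto (fun N : ℕ => ∑ n ∈ Finset.range N, f n) Filter.atTop (nhds Sp) ∧
    Filter.Tendsto (fun N : ℕ => ∑ n ∈ Finset.range N, f (-(n : ℤ) - 1)) Filter.atTop (nhds Sm) ∧
    S = Sp + Sm

/-! Multiply the kernel equation at `s = qⁿξ` by `(1 - q) s h(s)` and use the adjoint equation
for `h`: the `n`-th term of `a(x) g(x/q) + b(x) g(x) + c(x) g(qx)` becomes `(1 - q) (B(s/q) - B(s))`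
for the boundary term `B(s) = q s ã(qs) h(qs) Φ(x,s) - s c̃(s) h(s) Φ(x,qs)`. The bilateral sum of
this difference telescopes to `(1 - q) (g₂ - g₁)`. -/

namespace HasBilatSum

variable {f g : ℤ → ℂ} {S T : ℂ}

theorem unique (hS : HasBilatSum f S) (hT : HasBilatSum f T) : S = T := by
  obtain ⟨Sp, Sm, hp, hm, rfl⟩ := hS
  obtain ⟨Tp, Tm, hp', hm', rfl⟩ := hT
  rw [tendsto_nhds_unique hp hp', tendsto_nhds_unique hm hm']

theorem add (hf : HasBilatSum f S) (hg : HasBilatSum g T) :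
    HasBilatSum (fun n => f n + g n) (S + T) := by
  obtain ⟨Sp, Sm, hp, hm, rfl⟩ := hf
  obtain ⟨Tp, Tm, hp', hm', rfl⟩ := hg
  refine ⟨Sp + Tp, Sm + Tm, ?_, ?_, by ring⟩
  · simpa only [Finset.sum_add_distrib] using hp.add hp'
  · simpa only [Finset.sum_add_distrib] using hm.add hm'

theorem const_mul (c : ℂ) (hf : HasBilatSum f S) : HasBilatSum (fun n => c * f n) (c * S) := by
  obtain ⟨Sp, Sm, hp, hm, rfl⟩ := hf
  refine ⟨c * Sp, c * Sm, ?_, ?_, by ring⟩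
  · simpa only [Finset.mul_sum] using hp.const_mul c
  · simpa only [Finset.mul_sum] using hm.const_mul c

end HasBilatSum

theorem hasBilatSum_sub_shift {F : ℤ → ℂ} {l u : ℂ} (hl : Tendsto F atTop (𝓝 l))
    (hu : Tendsto F atBot (𝓝 u)) : HasBilatSum (fun n => F (n - 1) - F n) (u - l) := by
  refine ⟨F (-1) - l, u - F (-1), ?_, ?_, by ring⟩
  · have hpos : ∀ N : ℕ,
        ∑ n ∈ Finset.range N, (F ((n : ℤ) - 1) - F n) = F (-1) - F ((N : ℤ) - 1) := by
      intro N
      simpa using Finset.sum_range_sub' (fun k : ℕ => F ((k : ℤ) - 1)) N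
    simp only [hpos]
    refine tendsto_const_nhds.sub (hl.comp ?_)
    exact tendsto_atTop_add_const_right _ (-1) tendsto_natCast_atTop_atTop
  · have hneg : ∀ N : ℕ,
        ∑ n ∈ Finset.range N, (F (-(n : ℤ) - 1 - 1) - F (-(n : ℤ) - 1))
          = F (-(N : ℤ) - 1) - F (-1) := by
      intro N
      have htel := Finset.sum_range_sub (fun k : ℕ => F (-(k : ℤ) - 1)) N
      simp only [Nat.cast_zero, neg_zero, zero_sub] at htel
      rw [← htel]
      refine Finset.sum_congr rfl fun n _ => ?_
      congr 2
      push_cast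
      ring
    simp only [hneg]
    refine (hu.comp ?_).sub tendsto_const_nhds
    exact tendsto_atBot_add_const_right _ (-1)
      (tendsto_neg_atTop_atBot.comp tendsto_natCast_atTop_atTop)

def jacksonBoundary {K : Type*} [Field K] (q : K) (ta tc h φ : K → K) (s : K) : K :=
  q * s * ta (q * s) * h (q * s) * φ s - s * tc s * h s * φ (q * s)

theorem jacksonBoundary_div_sub_eq {K : Type*} [Field K] {q : K} (hq : q ≠ 0)
    {a b c ta tb tc h : K → K} {Φ : K → K → K} {x s : K}
    (hker : a x * Φ (x / q) s + b x * Φ x s + c x * Φ (q * x) s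
      = ta s * Φ x (s / q) + tb s * Φ x s + tc s * Φ x (q * s))
    (hh : q * ta (q * s) * h (q * s) + tb s * h s + q⁻¹ * tc (s / q) * h (s / q) = 0) :
    jacksonBoundary q ta tc h (Φ x) (s / q) - jacksonBoundary q ta tc h (Φ x) s
      = s * h s * (a x * Φ (x / q) s + b x * Φ x s + c x * Φ (q * x) s) := by
  unfold jacksonBoundary
  rw [mul_div_cancel₀ s hq]
  linear_combination -(s * h s) * hker - (s * Φ x s) * hh

theorem stmt10_general (q : ℝ) (hq0 : 0 < q)
    (a b c ta tb tc : ℂ → ℂ) (Φ : ℂ → ℂ → ℂ) (h : ℂ → ℂ)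
    (ξ x : ℂ)
    (hker : ∀ n : ℤ, ∀ s : ℂ, s = (q : ℂ) ^ n * ξ →
      a x * Φ (x / (q : ℂ)) s + b x * Φ x s + c x * Φ ((q : ℂ) * x) s
        = ta s * Φ x (s / (q : ℂ)) + tb s * Φ x s + tc s * Φ x ((q : ℂ) * s))
    (hh : ∀ n : ℤ, ∀ s : ℂ, s = (q : ℂ) ^ n * ξ →
      (q : ℂ) * ta ((q : ℂ) * s) * h ((q : ℂ) * s) + tb s * h s
        + (q : ℂ)⁻¹ * tc (s / (q : ℂ)) * h (s / (q : ℂ)) = 0)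
    (G : ℂ → ℂ)
    (hconv : ∀ y : ℂ, y = x ∨ y = (q : ℂ) * x ∨ y = x / (q : ℂ) →
      HasBilatSum (fun n : ℤ =>
        (1 - (q : ℂ)) * ((q : ℂ) ^ n * ξ) * h ((q : ℂ) ^ n * ξ) * Φ y ((q : ℂ) ^ n * ξ)) (G y))
    (g1 g2 : ℂ)
    (hg1 : Filter.Tendsto (fun L : ℤ =>
        (q : ℂ) * ((q : ℂ) ^ L * ξ) * ta ((q : ℂ) * ((q : ℂ) ^ L * ξ)) *
            h ((q : ℂ) * ((q : ℂ) ^ L * ξ)) * Φ x ((q : ℂ) ^ L * ξ)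
          - ((q : ℂ) ^ L * ξ) * tc ((q : ℂ) ^ L * ξ) * h ((q : ℂ) ^ L * ξ) *
            Φ x ((q : ℂ) * ((q : ℂ) ^ L * ξ))) Filter.atTop (nhds g1))
    (hg2 : Filter.Tendsto (fun K : ℤ =>
        (q : ℂ) * ((q : ℂ) ^ (K - 1) * ξ) * ta ((q : ℂ) * ((q : ℂ) ^ (K - 1) * ξ)) *
            h ((q : ℂ) * ((q : ℂ) ^ (K - 1) * ξ)) * Φ x ((q : ℂ) ^ (K - 1) * ξ)
          - ((q : ℂ) ^ (K - 1) * ξ) * tc ((q : ℂ) ^ (K - 1) * ξ) * h ((q : ℂ) ^ (K - 1) * ξ) *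
            Φ x ((q : ℂ) * ((q : ℂ) ^ (K - 1) * ξ))) Filter.atBot (nhds g2)) :
    a x * G (x / (q : ℂ)) + b x * G x + c x * G ((q : ℂ) * x)
      = (1 - (q : ℂ)) * (g2 - g1) := by
  have hq : (q : ℂ) ≠ 0 := mod_cast hq0.ne'
  set F : ℤ → ℂ := fun n => jacksonBoundary (q : ℂ) ta tc h (Φ x) ((q : ℂ) ^ n * ξ)
  have hg2' : Tendsto F atBot (𝓝 g2) := by
    have hshifted : Tendsto (fun n => F (n - 1)) atBot (𝓝 g2) := hg2
    simpa [Function.comp_def] using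
      hshifted.comp (tendsto_atBot_add_const_right _ 1 tendsto_id)
  have hterm : ∀ n : ℤ,
      a x * ((1 - (q : ℂ)) * ((q : ℂ) ^ n * ξ) * h ((q : ℂ) ^ n * ξ)
            * Φ (x / q) ((q : ℂ) ^ n * ξ))
        + b x * ((1 - (q : ℂ)) * ((q : ℂ) ^ n * ξ) * h ((q : ℂ) ^ n * ξ)
            * Φ x ((q : ℂ) ^ n * ξ))
        + c x * ((1 - (q : ℂ)) * ((q : ℂ) ^ n * ξ) * h ((q : ℂ) ^ n * ξ)
            * Φ ((q : ℂ) * x) ((q : ℂ) ^ n * ξ))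
      = (1 - (q : ℂ)) * (F (n - 1) - F n) := by
    intro n
    have hshift : (q : ℂ) ^ (n - 1) * ξ = (q : ℂ) ^ n * ξ / q := by
      rw [zpow_sub_one₀ hq]; ring
    simp only [F, hshift]
    linear_combination (1 - (q : ℂ)) *
      (jacksonBoundary_div_sub_eq hq (hker n _ rfl) (hh n _ rfl)).symm
  have hsum := (((hconv _ (Or.inr (Or.inr rfl))).const_mul (a x)).add
    ((hconv _ (Or.inl rfl)).const_mul (b x))).add ((hconv _ (Or.inr (Or.inl rfl))).const_mul (c x))
  simp only [hterm] at hsum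
  exact hsum.unique ((hasBilatSum_sub_shift hg1 hg2').const_mul _)

theorem stmt10 (q : ℝ) (hq0 : 0 < q) (hq1 : q < 1)
    (a b c ta tb tc : ℂ → ℂ) (Φ : ℂ → ℂ → ℂ) (h : ℂ → ℂ)
    (ξ x : ℂ) (hξ : ξ ≠ 0) (hx : x ≠ 0)
    (hker : ∀ n : ℤ, ∀ s : ℂ, s = (q : ℂ) ^ n * ξ →
      a x * Φ (x / (q : ℂ)) s + b x * Φ x s + c x * Φ ((q : ℂ) * x) s
        = ta s * Φ x (s / (q : ℂ)) + tb s * Φ x s + tc s * Φ x ((q : ℂ) * s))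
    (hh : ∀ n : ℤ, ∀ s : ℂ, s = (q : ℂ) ^ n * ξ →
      (q : ℂ) * ta ((q : ℂ) * s) * h ((q : ℂ) * s) + tb s * h s
        + (q : ℂ)⁻¹ * tc (s / (q : ℂ)) * h (s / (q : ℂ)) = 0)
    (G : ℂ → ℂ)
    (hconv : ∀ y : ℂ, y = x ∨ y = (q : ℂ) * x ∨ y = x / (q : ℂ) →
      HasBilatSum (fun n : ℤ =>
        (1 - (q : ℂ)) * ((q : ℂ) ^ n * ξ) * h ((q : ℂ) ^ n * ξ) * Φ y ((q : ℂ) ^ n * ξ)) (G y))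
    (g1 g2 : ℂ)
    (hg1 : Filter.Tendsto (fun L : ℤ =>
        (q : ℂ) * ((q : ℂ) ^ L * ξ) * ta ((q : ℂ) * ((q : ℂ) ^ L * ξ)) *
            h ((q : ℂ) * ((q : ℂ) ^ L * ξ)) * Φ x ((q : ℂ) ^ L * ξ)
          - ((q : ℂ) ^ L * ξ) * tc ((q : ℂ) ^ L * ξ) * h ((q : ℂ) ^ L * ξ) *
            Φ x ((q : ℂ) * ((q : ℂ) ^ L * ξ))) Filter.atTop (nhds g1))
    (hg2 : Filter.Tendsto (fun K : ℤ =>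
        (q : ℂ) * ((q : ℂ) ^ (K - 1) * ξ) * ta ((q : ℂ) * ((q : ℂ) ^ (K - 1) * ξ)) *
            h ((q : ℂ) * ((q : ℂ) ^ (K - 1) * ξ)) * Φ x ((q : ℂ) ^ (K - 1) * ξ)
          - ((q : ℂ) ^ (K - 1) * ξ) * tc ((q : ℂ) ^ (K - 1) * ξ) * h ((q : ℂ) ^ (K - 1) * ξ) *
            Φ x ((q : ℂ) * ((q : ℂ) ^ (K - 1) * ξ))) Filter.atBot (nhds g2)) :
    a x * G (x / (q : ℂ)) + b x * G x + c x * G ((q : ℂ) * x)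
      = (1 - (q : ℂ)) * (g2 - g1) :=
  stmt10_general q hq0 a b c ta tb tc Φ h ξ x hker hh G hconv g1 g2 hg1 hg2
end
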